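/- arXiv:1106.2993 — 3 statements merged into one kernel-verified Lean document; each statement's English description precedes it below -/
import Mathlib

section
/- Let b₀, b₁ > 0 with b₀ + b₁ < 1, set b = (b₀ + b₁)/2 and b̂ = 1 − √2/2. Let μ* be the (b₀,b₁)-branching measure on C and T the associated capacity. If b ≥ b̂ and |b₀ − b₁| ≤ √(8b − 4b² − 2), then for μ*-almost every R ∈ C, T(R) = 0. -/
open Set MeasureTheory Topology Filter

/-- Cantor space `2^ℕ`. -/
abbrev Cantor : Type := ℕ → Bool

/-- The basic interval `I(σ)` of all extensions of the finite binary string `σ`. -/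
def cyl (σ : List Bool) : Set Cantor :=
  {x | ∀ i : Fin σ.length, x i = σ.get i}

/-- The space `C` of nonempty closed subsets of Cantor space. -/
abbrev CC : Type := {K : Set Cantor // K.Nonempty ∧ IsClosed K}

/-- The hit-or-miss topology on `C`, generated by the sets
`V(U) = {K : K ∩ U ≠ ∅}` and `W(U) = {K : K ⊆ U}` for `U` open. -/
instance (priority := 10000) hitMissTop : TopologicalSpace CC :=
  TopologicalSpace.generateFrom
    ({S | ∃ U : Set Cantor, IsOpen U ∧ S = {K : CC | (K.1 ∩ U).Nonempty}} ∪
     {S | ∃ U : Set Cantor, IsOpen U ∧ S = {K : CC | K.1 ⊆ U}})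

/-- The Borel σ-algebra of the hit-or-miss topology. -/
instance (priority := 10000) hitMissMeasurable : MeasurableSpace CC := borel CC

/-- `A` is a finite tree of height `n` without dead ends. -/
def FinTree (n : ℕ) (A : Finset (List Bool)) : Prop :=
  A.Nonempty ∧
  (∀ σ ∈ A, σ.length ≤ n) ∧
  (∀ σ τ : List Bool, σ <+: τ → τ ∈ A → σ ∈ A) ∧
  (∀ σ ∈ A, σ.length < n → σ ++ [false] ∈ A ∨ σ ++ [true] ∈ A)

/-- `U_A = {K ∈ C : T_K ∩ {0,1}^{≤ n} = A}`. -/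
def UA (n : ℕ) (A : Finset (List Bool)) : Set CC :=
  {K | ∀ σ : List Bool, σ.length ≤ n → (σ ∈ A ↔ (K.1 ∩ cyl σ).Nonempty)}

/-- The weight of a node `σ` of `A` in the symmetric branching process with parameter `β`. -/
noncomputable def symWeight (β : List Bool → ℝ) (A : Finset (List Bool)) (σ : List Bool) : ℝ :=
  if σ ++ [false] ∈ A ∧ σ ++ [true] ∈ A then 1 - 2 * β σ else β σ

/-- `μ` is the symmetric branching measure on `C` with parameter `β`. -/
def IsSymBranching (β : List Bool → ℝ) (μ : Measure CC) : Prop :=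
  IsProbabilityMeasure μ ∧
  ∀ (n : ℕ) (A : Finset (List Bool)), FinTree n A →
    (μ (UA n A)).toReal = ∏ σ ∈ A.filter (fun σ => σ.length < n), symWeight β A σ

/-- The weight of a node `σ` of `A` in the `(b₀,b₁)`-branching process. -/
noncomputable def asymWeight (b0 b1 : ℝ) (A : Finset (List Bool)) (σ : List Bool) : ℝ :=
  if σ ++ [false] ∈ A ∧ σ ++ [true] ∈ A then 1 - b0 - b1
  else if σ ++ [false] ∈ A then b0 else b1

/-- `μ` is the `(b₀,b₁)`-branching measure on `C`. -/
def IsBranching (b0 b1 : ℝ) (μ : Measure CC) : Prop :=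
  IsProbabilityMeasure μ ∧
  ∀ (n : ℕ) (A : Finset (List Bool)), FinTree n A →
    (μ (UA n A)).toReal = ∏ σ ∈ A.filter (fun σ => σ.length < n), asymWeight b0 b1 A σ

/-- The capacity `T(Q) = μ*({K ∈ C : K ∩ Q ≠ ∅})` associated to a measure on `C`. -/
noncomputable def cap (μ : Measure CC) (Q : Set Cantor) : ℝ :=
  (μ {K : CC | (K.1 ∩ Q).Nonempty}).toReal

/-!
The level-`n` tree of a closed set is a `PrunedTree n`, and under the branching measure it has
law `weight`. If `R` has level-`n` tree `u`, every `K` hitting `R` has a level-`n` tree sharing a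
node of depth `n` with `u`, so `T(R) ≤ meetWeight u`, whose mean is the probability `q n` that two
independent branching trees of height `n` meet at depth `n`. Conditioning on the two roots gives
`q (n + 1) = ((1 - b₀)² + (1 - b₁)²) q n - (1 - b₀ - b₁)² (q n)²`, and the hypotheses on `b₀, b₁`
say precisely that `(1 - b₀)² + (1 - b₁)² ≤ 1`. Hence `q n ≤ 1 / ((1 - b₀ - b₁)² n + 1) → 0`, and
Markov's inequality `μ* {T ≥ ε} ≤ q n / ε` forces `T = 0` almost surely.
-/

theorem mul_le_one_of_le_sub_sq {q : ℕ → ℝ} {a : ℝ} (ha0 : 0 ≤ a) (ha1 : a ≤ 1) (hq0 : q 0 ≤ 1)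
    (hstep : ∀ n, q (n + 1) ≤ q n - a * q n ^ 2) (n : ℕ) : q n * (a * n + 1) ≤ 1 := by
  induction n with
  | zero => simpa using hq0
  | succ n ih =>
    have han : 0 ≤ a * n := by positivity
    have haq : a * q n ≤ 1 := by
      rcases le_or_gt (q n) 0 with hq | hq <;> nlinarith
    calc q (n + 1) * (a * ↑(n + 1) + 1) ≤ (q n - a * q n ^ 2) * (a * ↑(n + 1) + 1) :=
          mul_le_mul_of_nonneg_right (hstep n) (by positivity)
      _ = 1 - (1 - q n * (a * n + 1)) * (1 - a * q n) - (a * q n) ^ 2 := by push_cast; ring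
      _ ≤ 1 := by nlinarith [mul_nonneg (sub_nonneg.2 ih) (sub_nonneg.2 haq), sq_nonneg (a * q n)]

theorem tendsto_zero_of_le_sub_sq {q : ℕ → ℝ} {a : ℝ} (ha0 : 0 < a) (ha1 : a ≤ 1)
    (hq : ∀ n, 0 ≤ q n) (hq0 : q 0 ≤ 1) (hstep : ∀ n, q (n + 1) ≤ q n - a * q n ^ 2) :
    Tendsto q atTop (𝓝 0) := by
  have hlim : Tendsto (fun n : ℕ => (a * n + 1)⁻¹) atTop (𝓝 0) :=
    ((tendsto_natCast_atTop_atTop.const_mul_atTop ha0).atTop_add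
      tendsto_const_nhds).inv_tendsto_atTop
  refine tendsto_of_tendsto_of_tendsto_of_le_of_le tendsto_const_nhds hlim hq fun n => ?_
  rw [← one_div, le_div_iff₀ (by positivity)]
  exact mul_le_one_of_le_sub_sq ha0.le ha1 hq0 hstep n

theorem sum_filter_le_div {ι : Type*} (s : Finset ι) {w f : ι → ℝ} (hw : ∀ i ∈ s, 0 ≤ w i)
    (hf : ∀ i ∈ s, 0 ≤ f i) {ε : ℝ} (hε : 0 < ε) :
    ∑ i ∈ s.filter (ε ≤ f ·), w i ≤ (∑ i ∈ s, w i * f i) / ε := by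
  rw [le_div_iff₀ hε, Finset.sum_mul]
  calc ∑ i ∈ s.filter (ε ≤ f ·), w i * ε ≤ ∑ i ∈ s.filter (ε ≤ f ·), w i * f i :=
        Finset.sum_le_sum fun i hi =>
          mul_le_mul_of_nonneg_left (Finset.mem_filter.1 hi).2 (hw i (Finset.mem_filter.1 hi).1)
    _ ≤ ∑ i ∈ s, w i * f i :=
        Finset.sum_le_sum_of_subset_of_nonneg (Finset.filter_subset _ _)
          fun i hi _ => mul_nonneg (hw i hi) (hf i hi)

theorem ae_eq_zero_of_forall_measure_le_eq_zero {α : Type*} [MeasurableSpace α] {μ : Measure α}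
    {f : α → ℝ} (hf : ∀ x, 0 ≤ f x) (h : ∀ ε > 0, μ {x | ε ≤ f x} = 0) : ∀ᵐ x ∂μ, f x = 0 := by
  rw [ae_iff]
  refine measure_mono_null (fun x hx => ?_) (measure_iUnion_null fun k : ℕ =>
    h (1 / (k + 1)) Nat.one_div_pos_of_nat)
  obtain ⟨k, hk⟩ := exists_nat_one_div_lt ((hf x).lt_of_ne' hx)
  exact mem_iUnion.2 ⟨k, hk.le⟩

theorem one_sub_sq_add_one_sub_sq_le_one {b0 b1 : ℝ}
    (hb : 1 - Real.sqrt 2 / 2 ≤ (b0 + b1) / 2)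
    (hdiff : |b0 - b1| ≤ Real.sqrt (8 * ((b0 + b1) / 2) - 4 * ((b0 + b1) / 2) ^ 2 - 2))
    (hb1 : (b0 + b1) / 2 ≤ 1) :
    (1 - b0) ^ 2 + (1 - b1) ^ 2 ≤ 1 := by
  set b := (b0 + b1) / 2 with hb_def
  have hsplit : (1 - b0) ^ 2 + (1 - b1) ^ 2 = 2 * (1 - b) ^ 2 + (b0 - b1) ^ 2 / 2 := by
    rw [hb_def]
    ring
  have hsqrt2 : Real.sqrt 2 ^ 2 = 2 := Real.sq_sqrt zero_le_two
  have hdisc : 0 ≤ 8 * b - 4 * b ^ 2 - 2 := by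
    have : (1 - b) ^ 2 ≤ (Real.sqrt 2 / 2) ^ 2 := pow_le_pow_left₀ (by linarith) (by linarith) 2
    nlinarith
  have hd : (b0 - b1) ^ 2 ≤ 8 * b - 4 * b ^ 2 - 2 := by
    simpa [sq_abs, Real.sq_sqrt hdisc] using pow_le_pow_left₀ (abs_nonneg _) hdiff 2
  rw [hsplit]
  nlinarith

theorem Bool.cast_toNat_or (a b : Bool) :
    ((a || b).toNat : ℝ) = a.toNat + b.toNat - a.toNat * b.toNat := by
  cases a <;> cases b <;> simp

theorem cyl_anti {σ τ : List Bool} (h : σ <+: τ) : cyl τ ⊆ cyl σ := by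
  intro x hx i
  rw [hx ⟨i, i.2.trans_le h.length_le⟩, List.get_eq_getElem, List.get_eq_getElem, h.getElem]

theorem mem_cyl_append {x : Cantor} {σ : List Bool} (hx : x ∈ cyl σ) :
    x ∈ cyl (σ ++ [x σ.length]) := by
  rintro ⟨i, hi⟩
  simp only [List.length_append, List.length_singleton, Nat.lt_succ_iff] at hi
  rcases hi.lt_or_eq with hi | rfl
  · simpa [List.getElem_append_left hi] using hx ⟨i, hi⟩
  · simp

def pref (x : Cantor) (n : ℕ) : List Bool := List.ofFn fun i : Fin n => x i

theorem mem_cyl_pref (x : Cantor) (n : ℕ) : x ∈ cyl (pref x n) := by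
  rintro ⟨i, hi⟩
  simp [pref]

def graft (A B : Finset (List Bool)) : Finset (List Bool) :=
  insert [] (A.image (List.cons false) ∪ B.image (List.cons true))

@[simp] theorem nil_mem_graft (A B : Finset (List Bool)) : [] ∈ graft A B :=
  Finset.mem_insert_self _ _

@[simp] theorem false_cons_mem_graft {A B : Finset (List Bool)} {σ : List Bool} :
    false :: σ ∈ graft A B ↔ σ ∈ A := by
  simp [graft]

@[simp] theorem true_cons_mem_graft {A B : Finset (List Bool)} {σ : List Bool} :
    true :: σ ∈ graft A B ↔ σ ∈ B := by
  simp [graft]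

def IsPruned (n : ℕ) (A : Finset (List Bool)) : Prop :=
  (∀ σ ∈ A, σ.length ≤ n) ∧
  (∀ σ τ : List Bool, σ <+: τ → τ ∈ A → σ ∈ A) ∧
  (∀ σ ∈ A, σ.length < n → σ ++ [false] ∈ A ∨ σ ++ [true] ∈ A)

theorem isPruned_empty (n : ℕ) : IsPruned n ∅ := by
  simp [IsPruned]

theorem isPruned_graft {n : ℕ} {A B : Finset (List Bool)} (hA : IsPruned n A) (hB : IsPruned n B)
    (hAB : [] ∈ A ∨ [] ∈ B) : IsPruned (n + 1) (graft A B) := by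
  obtain ⟨hlenA, hpreA, hextA⟩ := hA
  obtain ⟨hlenB, hpreB, hextB⟩ := hB
  refine ⟨?_, ?_, ?_⟩
  · rintro (_ | ⟨_ | _, σ⟩) h
    · simp
    · simpa using hlenA σ (false_cons_mem_graft.1 h)
    · simpa using hlenB σ (true_cons_mem_graft.1 h)
  · rintro (_ | ⟨c, σ⟩) (_ | ⟨b, τ⟩) hστ h
    · simp
    · simp
    · simp at hστ
    · obtain ⟨rfl, hστ'⟩ := List.cons_prefix_cons.1 hστ
      cases c
      · exact false_cons_mem_graft.2 (hpreA σ τ hστ' (false_cons_mem_graft.1 h))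
      · exact true_cons_mem_graft.2 (hpreB σ τ hστ' (true_cons_mem_graft.1 h))
  · rintro (_ | ⟨_ | _, σ⟩) h hlt
    · simpa using hAB
    · simpa using hextA σ (false_cons_mem_graft.1 h) (by simpa using hlt)
    · simpa using hextB σ (true_cons_mem_graft.1 h) (by simpa using hlt)

theorem filter_graft (p : List Bool → Prop) [DecidablePred p] (A B : Finset (List Bool))
    (hp : p []) :
    (graft A B).filter p =
      graft (A.filter fun σ => p (false :: σ)) (B.filter fun σ => p (true :: σ)) := by
  ext (_ | ⟨_ | _, σ⟩) <;> simp [hp]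

theorem prod_graft (f : List Bool → ℝ) (A B : Finset (List Bool)) :
    ∏ σ ∈ graft A B, f σ = f [] * (∏ σ ∈ A, f (false :: σ)) * ∏ σ ∈ B, f (true :: σ) := by
  rw [graft, Finset.prod_insert (by simp), Finset.prod_union, Finset.prod_image, Finset.prod_image,
    mul_assoc]
  · simp
  · simp
  · simp [Finset.disjoint_left]

theorem asymWeight_graft_nil (b0 b1 : ℝ) (A B : Finset (List Bool)) :
    asymWeight b0 b1 (graft A B) [] =
      if [] ∈ A ∧ [] ∈ B then 1 - b0 - b1 else if [] ∈ A then b0 else b1 := by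
  simp [asymWeight]

theorem asymWeight_graft_false (b0 b1 : ℝ) (A B : Finset (List Bool)) (σ : List Bool) :
    asymWeight b0 b1 (graft A B) (false :: σ) = asymWeight b0 b1 A σ := by
  simp [asymWeight]

theorem asymWeight_graft_true (b0 b1 : ℝ) (A B : Finset (List Bool)) (σ : List Bool) :
    asymWeight b0 b1 (graft A B) (true :: σ) = asymWeight b0 b1 B σ := by
  simp [asymWeight]

theorem prod_asymWeight_graft (b0 b1 : ℝ) (n : ℕ) (A B : Finset (List Bool)) :
    ∏ σ ∈ (graft A B).filter (·.length < n + 1), asymWeight b0 b1 (graft A B) σ =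
      asymWeight b0 b1 (graft A B) [] * (∏ σ ∈ A.filter (·.length < n), asymWeight b0 b1 A σ) *
        ∏ σ ∈ B.filter (·.length < n), asymWeight b0 b1 B σ := by
  rw [filter_graft _ _ _ n.succ_pos, prod_graft]
  simp only [asymWeight_graft_false, asymWeight_graft_true, List.length_cons, add_lt_add_iff_right]

noncomputable def child (b : Bool) (A : Finset (List Bool)) : Finset (List Bool) :=
  A.preimage (List.cons b) List.cons_injective.injOn

@[simp] theorem mem_child {b : Bool} {A : Finset (List Bool)} {σ : List Bool} :
    σ ∈ child b A ↔ b :: σ ∈ A :=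
  Finset.mem_preimage

theorem graft_child {A : Finset (List Bool)} (hA : [] ∈ A) :
    graft (child false A) (child true A) = A := by
  ext (_ | ⟨_ | _, σ⟩) <;> simp [hA]

theorem nil_mem_of_finTree {n : ℕ} {A : Finset (List Bool)} (hA : FinTree n A) : [] ∈ A :=
  let ⟨τ, hτ⟩ := hA.1
  hA.2.2.1 [] τ List.nil_prefix hτ

theorem finTree_child {n : ℕ} {A : Finset (List Bool)} {b : Bool} (hA : FinTree (n + 1) A)
    (hb : [b] ∈ A) : FinTree n (child b A) := by
  obtain ⟨-, hlen, hpre, hext⟩ := hA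
  refine ⟨⟨[], mem_child.2 hb⟩, fun σ hσ => ?_, fun σ τ hστ hτ => ?_, fun σ hσ hlt => ?_⟩
  · simpa using hlen _ (mem_child.1 hσ)
  · exact mem_child.2 (hpre _ _ (List.cons_prefix_cons.2 ⟨rfl, hστ⟩) (mem_child.1 hτ))
  · simpa using hext _ (mem_child.1 hσ) (by simpa using hlt)

theorem child_eq_empty {n : ℕ} {A : Finset (List Bool)} {b : Bool} (hA : FinTree n A)
    (hb : [b] ∉ A) : child b A = ∅ :=
  Finset.eq_empty_of_forall_notMem fun σ hσ =>
    hb (hA.2.2.1 [b] (b :: σ) (List.cons_prefix_cons.2 ⟨rfl, List.nil_prefix⟩) (mem_child.1 hσ))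

-- `T_K ∩ {0,1}^{≤ n}`
noncomputable def levelTree (K : CC) (n : ℕ) : Finset (List Bool) :=
  ((List.finite_length_le Bool n).subset
    (fun _ h => h.1 : {σ : List Bool | σ.length ≤ n ∧ (K.1 ∩ cyl σ).Nonempty} ⊆ _)).toFinset

theorem mem_levelTree {K : CC} {n : ℕ} {σ : List Bool} :
    σ ∈ levelTree K n ↔ σ.length ≤ n ∧ (K.1 ∩ cyl σ).Nonempty := by
  simp [levelTree]

theorem finTree_levelTree (K : CC) (n : ℕ) : FinTree n (levelTree K n) := by
  obtain ⟨x, hx⟩ := K.2.1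
  refine ⟨⟨[], mem_levelTree.2 ⟨Nat.zero_le n, x, hx, fun i => i.elim0⟩⟩,
    fun σ hσ => (mem_levelTree.1 hσ).1, fun σ τ hστ hτ => ?_, fun σ hσ hlt => ?_⟩
  · obtain ⟨hlen, y, hyK, hy⟩ := mem_levelTree.1 hτ
    exact mem_levelTree.2 ⟨hστ.length_le.trans hlen, y, hyK, cyl_anti hστ hy⟩
  · obtain ⟨-, y, hyK, hy⟩ := mem_levelTree.1 hσ
    have hmem : σ ++ [y σ.length] ∈ levelTree K n :=
      mem_levelTree.2 ⟨by simpa using hlt, y, hyK, mem_cyl_append hy⟩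
    cases h : y σ.length
    · exact .inl (h ▸ hmem)
    · exact .inr (h ▸ hmem)

theorem mem_UA_levelTree (K : CC) (n : ℕ) : K ∈ UA n (levelTree K n) :=
  fun σ hσ => by simp [mem_levelTree, hσ]

theorem pref_mem_of_mem_UA {n : ℕ} {A : Finset (List Bool)} {K : CC} (hK : K ∈ UA n A)
    {x : Cantor} (hx : x ∈ K.1) : pref x n ∈ A :=
  (hK _ (by simp [pref])).2 ⟨x, hx, mem_cyl_pref x n⟩

-- A finite tree of height `n` without dead ends, described by which children its root has.
inductive PrunedTree : ℕ → Type
  | leaf : PrunedTree 0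
  | left {n : ℕ} : PrunedTree n → PrunedTree (n + 1)
  | right {n : ℕ} : PrunedTree n → PrunedTree (n + 1)
  | both {n : ℕ} : PrunedTree n → PrunedTree n → PrunedTree (n + 1)

namespace PrunedTree

def equivSucc (n : ℕ) :
    PrunedTree (n + 1) ≃ PrunedTree n ⊕ PrunedTree n ⊕ PrunedTree n × PrunedTree n where
  toFun
    | left t => .inl t
    | right t => .inr (.inl t)
    | both s t => .inr (.inr (s, t))
  invFun
    | .inl t => left t
    | .inr (.inl t) => right t
    | .inr (.inr (s, t)) => both s t
  left_inv t := by cases t <;> rfl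
  right_inv x := by rcases x with t | t | ⟨s, t⟩ <;> rfl

instance : Unique (PrunedTree 0) where
  default := leaf
  uniq t := by cases t; rfl

instance instFintype : ∀ n, Fintype (PrunedTree n)
  | 0 => inferInstance
  | n + 1 =>
    letI := instFintype n
    Fintype.ofEquiv _ (equivSucc n).symm

theorem sum_succ {n : ℕ} (f : PrunedTree (n + 1) → ℝ) :
    ∑ x, f x = ∑ t, f (left t) + ∑ t, f (right t) + ∑ s, ∑ t, f (both s t) := by
  rw [← (equivSucc n).symm.sum_comp, Fintype.sum_sum_type, Fintype.sum_sum_type,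
    Fintype.sum_prod_type, add_assoc]
  rfl

section Weight

variable (b0 b1 : ℝ)

noncomputable def weight : ∀ {n : ℕ}, PrunedTree n → ℝ
  | _, leaf => 1
  | _, left t => b0 * weight t
  | _, right t => b1 * weight t
  | _, both s t => (1 - b0 - b1) * weight s * weight t

variable {b0 b1} in
theorem weight_nonneg (h0 : 0 ≤ b0) (h1 : 0 ≤ b1) (h01 : b0 + b1 ≤ 1) :
    ∀ {n : ℕ} (t : PrunedTree n), 0 ≤ weight b0 b1 t
  | _, leaf => zero_le_one
  | _, left t => mul_nonneg h0 (weight_nonneg h0 h1 h01 t)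
  | _, right t => mul_nonneg h1 (weight_nonneg h0 h1 h01 t)
  | _, both s t => mul_nonneg (mul_nonneg (by linarith) (weight_nonneg h0 h1 h01 s))
      (weight_nonneg h0 h1 h01 t)

noncomputable def expect {n : ℕ} (f : PrunedTree n → ℝ) : ℝ :=
  ∑ t, weight b0 b1 t * f t

theorem expect_succ {n : ℕ} (f : PrunedTree (n + 1) → ℝ) :
    expect b0 b1 f = b0 * expect b0 b1 (fun t => f (left t)) +
      b1 * expect b0 b1 (fun t => f (right t)) +
      (1 - b0 - b1) * expect b0 b1 (fun s => expect b0 b1 (fun t => f (both s t))) := by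
  simp only [expect, sum_succ, weight, Finset.mul_sum, mul_assoc]

theorem sum_weight : ∀ n : ℕ, ∑ t : PrunedTree n, weight b0 b1 t = 1
  | 0 => Fintype.sum_unique _
  | n + 1 => by
    have h := (expect_succ b0 b1 (n := n) fun _ => 1)
    simp only [expect, mul_one, sum_weight n] at h
    rw [h]
    ring

variable {b0 b1} {n : ℕ} (f g : PrunedTree n → ℝ) (c : ℝ)

@[simp] theorem expect_const : expect b0 b1 (fun _ : PrunedTree n => c) = c := by
  simp [expect, ← Finset.sum_mul, sum_weight]

@[simp] theorem expect_add :
    expect b0 b1 (fun t => f t + g t) = expect b0 b1 f + expect b0 b1 g := by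
  simp [expect, mul_add, Finset.sum_add_distrib]

@[simp] theorem expect_sub :
    expect b0 b1 (fun t => f t - g t) = expect b0 b1 f - expect b0 b1 g := by
  simp [expect, mul_sub, Finset.sum_sub_distrib]

@[simp] theorem expect_const_mul : expect b0 b1 (fun t => c * f t) = c * expect b0 b1 f := by
  simp [expect, Finset.mul_sum, mul_left_comm]

@[simp] theorem expect_mul_const : expect b0 b1 (fun t => f t * c) = expect b0 b1 f * c := by
  simp [expect, Finset.sum_mul, mul_assoc]

end Weight

def meet : ∀ {n : ℕ}, PrunedTree n → PrunedTree n → Bool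
  | _, leaf, leaf => true
  | _, left s, left t => meet s t
  | _, left s, both t _ => meet s t
  | _, right s, right t => meet s t
  | _, right s, both _ t => meet s t
  | _, both s _, left t => meet s t
  | _, both _ s, right t => meet s t
  | _, both s s', both t t' => meet s t || meet s' t'
  | _, left _, right _ => false
  | _, right _, left _ => false

section Meet

variable (b0 b1 : ℝ)

noncomputable def meetWeight {n : ℕ} (u : PrunedTree n) : ℝ :=
  expect b0 b1 fun t => ((meet t u).toNat : ℝ)

noncomputable def meetProb (n : ℕ) : ℝ :=
  expect b0 b1 (meetWeight b0 b1 (n := n))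

theorem meetWeight_left {n : ℕ} (u : PrunedTree n) :
    meetWeight b0 b1 (left u) = (1 - b1) * meetWeight b0 b1 u := by
  rw [meetWeight, expect_succ]
  simp only [meet, Bool.toNat_false, CharP.cast_eq_zero, expect_const, mul_zero, add_zero,
    meetWeight]
  ring

theorem meetWeight_right {n : ℕ} (u : PrunedTree n) :
    meetWeight b0 b1 (right u) = (1 - b0) * meetWeight b0 b1 u := by
  rw [meetWeight, expect_succ]
  simp only [meet, Bool.toNat_false, CharP.cast_eq_zero, expect_const, mul_zero, zero_add,
    meetWeight]
  ring

theorem meetWeight_both {n : ℕ} (u v : PrunedTree n) :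
    meetWeight b0 b1 (both u v) = (1 - b1) * meetWeight b0 b1 u + (1 - b0) * meetWeight b0 b1 v -
      (1 - b0 - b1) * meetWeight b0 b1 u * meetWeight b0 b1 v := by
  rw [meetWeight, expect_succ]
  simp only [meet, Bool.cast_toNat_or, expect_sub, expect_add, expect_const, expect_const_mul,
    expect_mul_const, meetWeight]
  ring

theorem meetProb_succ (n : ℕ) :
    meetProb b0 b1 (n + 1) = ((1 - b0) ^ 2 + (1 - b1) ^ 2) * meetProb b0 b1 n -
      (1 - b0 - b1) ^ 2 * meetProb b0 b1 n ^ 2 := by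
  rw [meetProb, expect_succ]
  simp only [meetWeight_left, meetWeight_right, meetWeight_both, meetProb, expect_const_mul,
    expect_sub, expect_add, expect_const, expect_mul_const]
  ring

end Meet

def nodes : ∀ {n : ℕ}, PrunedTree n → Finset (List Bool)
  | _, leaf => {[]}
  | _, left t => graft (nodes t) ∅
  | _, right t => graft ∅ (nodes t)
  | _, both s t => graft (nodes s) (nodes t)

@[simp] theorem nil_mem_nodes {n : ℕ} (t : PrunedTree n) : [] ∈ nodes t := by
  cases t <;> simp [nodes]

theorem finTree_nodes : ∀ {n : ℕ} (t : PrunedTree n), FinTree n (nodes t)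
  | _, leaf => ⟨by simp [nodes], by simp [nodes],
      fun _ _ h hτ => by rw [nodes, Finset.mem_singleton] at hτ ⊢; exact List.prefix_nil.1 (hτ ▸ h),
      by simp [nodes]⟩
  | _, left t => ⟨⟨[], by simp [nodes]⟩,
      isPruned_graft (finTree_nodes t).2 (isPruned_empty _) (by simp)⟩
  | _, right t => ⟨⟨[], by simp [nodes]⟩,
      isPruned_graft (isPruned_empty _) (finTree_nodes t).2 (by simp)⟩
  | _, both s t => ⟨⟨[], by simp [nodes]⟩,
      isPruned_graft (finTree_nodes s).2 (finTree_nodes t).2 (by simp)⟩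

theorem prod_asymWeight_nodes (b0 b1 : ℝ) : ∀ {n : ℕ} (t : PrunedTree n),
    ∏ σ ∈ (nodes t).filter (·.length < n), asymWeight b0 b1 (nodes t) σ = weight b0 b1 t
  | _, leaf => by simp [nodes, weight]
  | _, left t => by
    rw [nodes, prod_asymWeight_graft, prod_asymWeight_nodes b0 b1 t]
    simp [asymWeight_graft_nil, weight]
  | _, right t => by
    rw [nodes, prod_asymWeight_graft, prod_asymWeight_nodes b0 b1 t]
    simp [asymWeight_graft_nil, weight]
  | _, both s t => by
    rw [nodes, prod_asymWeight_graft, prod_asymWeight_nodes b0 b1 s, prod_asymWeight_nodes b0 b1 t]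
    simp [asymWeight_graft_nil, weight]

theorem exists_nodes_eq :
    ∀ {n : ℕ} {A : Finset (List Bool)}, FinTree n A → ∃ t : PrunedTree n, nodes t = A
  | 0, A, hA => ⟨leaf, by
      refine (Finset.eq_singleton_iff_unique_mem.2 ⟨nil_mem_of_finTree hA, fun σ hσ => ?_⟩).symm
      exact List.eq_nil_of_length_eq_zero (Nat.le_zero.1 (hA.2.1 σ hσ))⟩
  | n + 1, A, hA => by
    rw [← graft_child (nil_mem_of_finTree hA)]
    by_cases hf : [false] ∈ A <;> by_cases ht : [true] ∈ A
    · obtain ⟨s, hs⟩ := exists_nodes_eq (finTree_child hA hf)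
      obtain ⟨t, ht⟩ := exists_nodes_eq (finTree_child hA ht)
      exact ⟨both s t, by rw [nodes, hs, ht]⟩
    · obtain ⟨s, hs⟩ := exists_nodes_eq (finTree_child hA hf)
      exact ⟨left s, by rw [nodes, hs, child_eq_empty hA ht]⟩
    · obtain ⟨t, ht⟩ := exists_nodes_eq (finTree_child hA ht)
      exact ⟨right t, by rw [nodes, ht, child_eq_empty hA hf]⟩
    · simpa [hf, ht] using hA.2.2.2 [] (nil_mem_of_finTree hA) n.succ_pos

theorem meet_of_mem_nodes {n : ℕ} {s t : PrunedTree n} {σ : List Bool} (hσ : σ.length = n)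
    (hs : σ ∈ nodes s) (ht : σ ∈ nodes t) : meet s t := by
  induction n generalizing σ with
  | zero => cases s; cases t; rfl
  | succ n ih =>
    obtain _ | ⟨_ | _, σ⟩ := σ
    · simp at hσ
    all_goals
      cases s <;> cases t <;>
        simp only [nodes, meet, false_cons_mem_graft, true_cons_mem_graft, Finset.notMem_empty,
          List.length_cons, Nat.add_right_cancel_iff, Bool.or_eq_true] at hσ hs ht ⊢ <;>
        first | exact ih hσ hs ht | exact .inl (ih hσ hs ht) | exact .inr (ih hσ hs ht)

theorem exists_mem_UA_nodes (K : CC) (n : ℕ) : ∃ t : PrunedTree n, K ∈ UA n t.nodes :=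
  let ⟨t, ht⟩ := exists_nodes_eq (finTree_levelTree K n)
  ⟨t, ht ▸ mem_UA_levelTree K n⟩

variable {b0 b1 : ℝ}

theorem expect_nonneg (h0 : 0 ≤ b0) (h1 : 0 ≤ b1) (h01 : b0 + b1 ≤ 1) {n : ℕ}
    {f : PrunedTree n → ℝ} (hf : ∀ t, 0 ≤ f t) : 0 ≤ expect b0 b1 f :=
  Finset.sum_nonneg fun t _ => mul_nonneg (weight_nonneg h0 h1 h01 t) (hf t)

theorem meetWeight_nonneg (h0 : 0 ≤ b0) (h1 : 0 ≤ b1) (h01 : b0 + b1 ≤ 1) {n : ℕ}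
    (u : PrunedTree n) : 0 ≤ meetWeight b0 b1 u :=
  expect_nonneg h0 h1 h01 fun _ => Nat.cast_nonneg _

theorem meetProb_nonneg (h0 : 0 ≤ b0) (h1 : 0 ≤ b1) (h01 : b0 + b1 ≤ 1) (n : ℕ) :
    0 ≤ meetProb b0 b1 n :=
  expect_nonneg h0 h1 h01 (meetWeight_nonneg h0 h1 h01)

theorem meetProb_zero : meetProb b0 b1 0 = 1 := by
  simp only [meetProb, meetWeight, expect, Fintype.sum_unique]
  norm_num [show (default : PrunedTree 0) = leaf from rfl, weight, meet]

variable {μ : Measure CC}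

theorem tendsto_meetProb (h0 : 0 ≤ b0) (h1 : 0 ≤ b1) (hsum : b0 + b1 < 1)
    (hm : (1 - b0) ^ 2 + (1 - b1) ^ 2 ≤ 1) : Tendsto (meetProb b0 b1) atTop (𝓝 0) := by
  have hq := meetProb_nonneg h0 h1 hsum.le
  refine tendsto_zero_of_le_sub_sq (a := (1 - b0 - b1) ^ 2) (by nlinarith) (by nlinarith) hq
    meetProb_zero.le fun n => ?_
  rw [meetProb_succ]
  nlinarith [hq n]

theorem measure_biUnion_UA_le (hμ : IsBranching b0 b1 μ) {n : ℕ} (S : Finset (PrunedTree n)) :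
    (μ (⋃ t ∈ S, UA n t.nodes)).toReal ≤ ∑ t ∈ S, weight b0 b1 t := by
  have := hμ.1
  calc (μ (⋃ t ∈ S, UA n t.nodes)).toReal ≤ (∑ t ∈ S, μ (UA n t.nodes)).toReal :=
        ENNReal.toReal_mono (ENNReal.sum_ne_top.2 fun _ _ => measure_ne_top _ _)
          (measure_biUnion_finset_le S _)
    _ = ∑ t ∈ S, weight b0 b1 t := by
        rw [ENNReal.toReal_sum fun _ _ => measure_ne_top _ _]
        exact Finset.sum_congr rfl fun t _ => by
          rw [hμ.2 n _ (finTree_nodes t), prod_asymWeight_nodes]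

theorem cap_le_meetWeight (hμ : IsBranching b0 b1 μ) {n : ℕ} {R : CC} {u : PrunedTree n}
    (hR : R ∈ UA n u.nodes) : cap μ R.1 ≤ meetWeight b0 b1 u := by
  have := hμ.1
  have hsub : {K : CC | (K.1 ∩ R.1).Nonempty} ⊆
      ⋃ t ∈ Finset.univ.filter (meet · u), UA n t.nodes := by
    rintro K ⟨x, hxK, hxR⟩
    obtain ⟨t, hK⟩ := exists_mem_UA_nodes K n
    refine mem_biUnion (Finset.mem_filter.2 ⟨Finset.mem_univ t, ?_⟩) hK
    exact meet_of_mem_nodes (by simp [pref]) (pref_mem_of_mem_UA hK hxK)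
      (pref_mem_of_mem_UA hR hxR)
  calc cap μ R.1 ≤ (μ (⋃ t ∈ Finset.univ.filter (meet · u), UA n t.nodes)).toReal :=
        ENNReal.toReal_mono (measure_ne_top _ _) (measure_mono hsub)
    _ ≤ ∑ t ∈ Finset.univ.filter (meet · u), weight b0 b1 t := measure_biUnion_UA_le hμ _
    _ = meetWeight b0 b1 u := by
        rw [Finset.sum_filter, meetWeight, expect]
        exact Finset.sum_congr rfl fun t _ => by cases meet t u <;> simp

theorem measure_cap_ge_le (hμ : IsBranching b0 b1 μ) (h0 : 0 ≤ b0) (h1 : 0 ≤ b1)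
    (h01 : b0 + b1 ≤ 1) {ε : ℝ} (hε : 0 < ε) (n : ℕ) :
    (μ {R : CC | ε ≤ cap μ R.1}).toReal ≤ meetProb b0 b1 n / ε := by
  have := hμ.1
  set S := Finset.univ.filter (ε ≤ meetWeight b0 b1 (n := n) ·)
  have hsub : {R : CC | ε ≤ cap μ R.1} ⊆ ⋃ u ∈ S, UA n u.nodes := by
    intro R hR
    obtain ⟨u, hu⟩ := exists_mem_UA_nodes R n
    exact mem_biUnion (Finset.mem_filter.2 ⟨Finset.mem_univ u,
      le_trans hR (cap_le_meetWeight hμ hu)⟩) hu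
  calc (μ {R : CC | ε ≤ cap μ R.1}).toReal ≤ (μ (⋃ u ∈ S, UA n u.nodes)).toReal :=
        ENNReal.toReal_mono (measure_ne_top _ _) (measure_mono hsub)
    _ ≤ ∑ u ∈ S, weight b0 b1 u := measure_biUnion_UA_le hμ S
    _ ≤ meetProb b0 b1 n / ε :=
        sum_filter_le_div _ (fun u _ => weight_nonneg h0 h1 h01 u)
          (fun u _ => meetWeight_nonneg h0 h1 h01 u) hε

theorem measure_cap_ge_eq_zero (hμ : IsBranching b0 b1 μ) (h0 : 0 ≤ b0) (h1 : 0 ≤ b1)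
    (h01 : b0 + b1 ≤ 1) (hq : Tendsto (meetProb b0 b1) atTop (𝓝 0)) {ε : ℝ} (hε : 0 < ε) :
    μ {R : CC | ε ≤ cap μ R.1} = 0 := by
  have := hμ.1
  have hle : (μ {R : CC | ε ≤ cap μ R.1}).toReal ≤ 0 := by
    simpa using ge_of_tendsto' (hq.div_const ε) (measure_cap_ge_le hμ h0 h1 h01 hε)
  exact ((ENNReal.toReal_eq_zero_iff _).1 (hle.antisymm ENNReal.toReal_nonneg)).resolve_right
    (measure_ne_top _ _)

end PrunedTree

/-- for the `(b₀,b₁)`-branching measure with `b = (b₀+b₁)/2 ≥ 1 − √2/2` and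
`|b₀ − b₁| ≤ √(8b − 4b² − 2)`, almost every closed set has capacity zero. -/
theorem stmt_2 (b0 b1 : ℝ) (h0 : 0 < b0) (h1 : 0 < b1) (hsum : b0 + b1 < 1)
    (μ : Measure CC) (hμ : IsBranching b0 b1 μ)
    (hb : 1 - Real.sqrt 2 / 2 ≤ (b0 + b1) / 2)
    (hdiff : |b0 - b1| ≤
      Real.sqrt (8 * ((b0 + b1) / 2) - 4 * ((b0 + b1) / 2) ^ 2 - 2)) :
    ∀ᵐ R ∂μ, cap μ R.1 = 0 := by
  have hq := PrunedTree.tendsto_meetProb h0.le h1.le hsum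
    (one_sub_sq_add_one_sub_sq_le_one hb hdiff (by linarith))
  exact ae_eq_zero_of_forall_measure_le_eq_zero (fun R => ENNReal.toReal_nonneg) fun ε hε =>
    PrunedTree.measure_cap_ge_eq_zero hμ h0.le h1.le hsum.le hq hε
end

section
/- Let b₀, b₁ > 0 with b₀ + b₁ < 1, set b = (b₀ + b₁)/2 and b̂ = 1 − √2/2. Let μ* be the (b₀,b₁)-branching measure on C and T the associated capacity. If either b < b̂, or b ≥ b̂ and |b₀ − b₁| > √(8b − 4b² − 2), then μ*({R ∈ C : T(R) > 0}) > 0. -/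
open Set MeasureTheory Topology Filter

/-!
Let `ν = μ ⊗ μ` and, for a pair `(K, R)`, let `Z_n` count the strings of length `n` whose
intervals meet both `K` and `R`. The law of `T_K ∩ {0,1}^{≤n}` is the finite tree measure
prescribed by `IsBranching`, and splitting trees at the root gives `E_ν Z_n = m^n` with
`m = (1 - b₀)² + (1 - b₁)²` and, once `m > 1`, `E_ν Z_n² ≤ C m^{2n}`; the hypothesis on
`(b₀, b₁)` says exactly that `m > 1`. By Cauchy–Schwarz `ν(Z_n > 0) ≥ 1/C` for every `n`.
These events decrease, and by compactness every pair in all of them has `K ∩ R ≠ ∅`, so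
`ν(K ∩ R ≠ ∅) > 0`. By Fubini, `T(R) = μ(K ∩ R ≠ ∅) > 0` for a set of `R` of positive measure.
-/

namespace BranchingCapacity

lemma sum_product_mul_sum_mul_eq_sum_sq {R ι κ : Type*} [CommSemiring R] (s : Finset ι)
    (t : Finset κ) (w : ι → R) (u : κ → ι → R) :
    ∑ p ∈ s ×ˢ s, w p.1 * w p.2 * ∑ j ∈ t, u j p.1 * u j p.2 =
      ∑ j ∈ t, (∑ i ∈ s, w i * u j i) ^ 2 := by
  simp_rw [sq, Finset.sum_mul_sum, Finset.sum_product, Finset.mul_sum]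
  rw [Finset.sum_comm (s := t)]
  refine Finset.sum_congr rfl fun i _ => ?_
  rw [Finset.sum_comm (s := t)]
  exact Finset.sum_congr rfl fun _ _ => Finset.sum_congr rfl fun _ _ => by ring

lemma sq_sum_mul_le_sum_filter_mul_sum_mul_sq {R ι : Type*} [CommSemiring R] [LinearOrder R]
    [IsStrictOrderedRing R] [ExistsAddOfLE R] (s : Finset ι) (w Z : ι → R)
    (P : ι → Prop) [DecidablePred P] (hw : ∀ i ∈ s, 0 ≤ w i) (hZ : ∀ i ∈ s, ¬ P i → Z i = 0) :
    (∑ i ∈ s, w i * Z i) ^ 2 ≤ (∑ i ∈ s with P i, w i) * ∑ i ∈ s, w i * Z i ^ 2 := by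
  rw [Finset.sum_filter]
  refine Finset.sum_sq_le_sum_mul_sum_of_sq_le_mul s (fun i hi => ?_)
    (fun i hi => mul_nonneg (hw i hi) (sq_nonneg _)) fun i hi => ?_
  · split_ifs
    exacts [hw i hi, le_rfl]
  · split_ifs with h
    · exact le_of_eq (by ring)
    · simp [hZ i hi h]

lemma inter_nonempty_of_forall_agree {X : Type*} [TopologicalSpace X] [CompactSpace X]
    [FirstCountableTopology X] {K R : Set (ℕ → X)} (hK : IsClosed K) (hR : IsClosed R)
    (h : ∀ n, ∃ x ∈ K, ∃ y ∈ R, ∀ i < n, x i = y i) : (K ∩ R).Nonempty := by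
  choose x hx y hy hxy using h
  obtain ⟨z, hz, φ, hφ, hxz⟩ := hK.isCompact.tendsto_subseq hx
  have hyz : Tendsto (y ∘ φ) atTop (𝓝 z) := by
    refine tendsto_pi_nhds.2 fun i => ((tendsto_pi_nhds.1 hxz) i).congr' ?_
    filter_upwards [eventually_gt_atTop i] with k hk
    exact hxy (φ k) i (hk.trans_le (hφ.id_le k))
  exact ⟨z, hz, hR.mem_of_tendsto hyz (Eventually.of_forall fun k => hy (φ k))⟩

def strings : ℕ → Finset (List Bool)
  | 0 => {[]}
  | n + 1 => (Finset.univ ×ˢ strings n).image fun p => p.1 :: p.2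

@[simp]
lemma mem_strings {n : ℕ} {σ : List Bool} : σ ∈ strings n ↔ σ.length = n := by
  induction n generalizing σ with
  | zero => simp [strings]
  | succ n ih => cases σ <;> simp [strings, ih]

lemma sum_strings_succ {M : Type*} [AddCommMonoid M] (n : ℕ) (f : List Bool → M) :
    ∑ σ ∈ strings (n + 1), f σ = ∑ σ ∈ strings n, (f (false :: σ) + f (true :: σ)) := by
  rw [strings, Finset.sum_image (fun p _ q _ h => by simpa [Prod.ext_iff] using h),
    Finset.sum_product, Fintype.sum_bool, ← Finset.sum_add_distrib]
  exact Finset.sum_congr rfl fun _ _ => add_comm _ _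

/-- The tree whose root has subtrees `A` and `B`; `∅` stands for a missing child. -/
def node (A B : Finset (List Bool)) : Finset (List Bool) :=
  insert [] (A.image (List.cons false) ∪ B.image (List.cons true))

section node

variable {A B : Finset (List Bool)} {σ : List Bool}

@[simp] lemma nil_mem_node : [] ∈ node A B := by simp [node]

@[simp] lemma false_cons_mem_node : false :: σ ∈ node A B ↔ σ ∈ A := by simp [node]

@[simp] lemma true_cons_mem_node : true :: σ ∈ node A B ↔ σ ∈ B := by simp [node]

lemma cons_mem_node {a : Bool} : a :: σ ∈ node A B ↔ σ ∈ cond a B A := by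
  cases a <;> simp

lemma node_inj {A' B' : Finset (List Bool)} : node A B = node A' B' ↔ A = A' ∧ B = B' := by
  refine ⟨fun h => ⟨?_, ?_⟩, fun h => h.1 ▸ h.2 ▸ rfl⟩ <;> ext σ
  · rw [← false_cons_mem_node (B := B), h, false_cons_mem_node]
  · rw [← true_cons_mem_node (A := A), h, true_cons_mem_node]

end node

def subtree (a : Bool) (T : Finset (List Bool)) : Finset (List Bool) :=
  {σ ∈ T.image List.tail | a :: σ ∈ T}

@[simp]
lemma mem_subtree {a : Bool} {T : Finset (List Bool)} {σ : List Bool} :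
    σ ∈ subtree a T ↔ a :: σ ∈ T := by
  simp only [subtree, Finset.mem_filter, Finset.mem_image, and_iff_right_iff_imp]
  exact fun h => ⟨_, h, rfl⟩

lemma node_subtree {T : Finset (List Bool)} (h : [] ∈ T) :
    node (subtree false T) (subtree true T) = T := by
  ext σ
  rcases σ with _ | ⟨_ | _, σ⟩ <;> simp [h]

section FinTree

variable {n : ℕ} {A B T : Finset (List Bool)}

lemma nil_mem_of_finTree (h : FinTree n A) : [] ∈ A :=
  let ⟨σ, hσ⟩ := h.1
  h.2.2.1 [] σ σ.nil_prefix hσ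

lemma finTree_zero_iff : FinTree 0 A ↔ A = {[]} := by
  refine ⟨fun h => ?_, ?_⟩
  · ext σ
    refine ⟨fun hσ => ?_, fun hσ => (Finset.mem_singleton.1 hσ) ▸ nil_mem_of_finTree h⟩
    simpa [List.length_eq_zero_iff] using h.2.1 σ hσ
  · rintro rfl
    exact ⟨⟨[], by simp⟩, by simp, fun σ τ hp hτ => by simp_all [List.prefix_nil], by simp⟩

lemma finTree_node (hA : A.Nonempty → FinTree n A) (hB : B.Nonempty → FinTree n B)
    (hAB : A.Nonempty ∨ B.Nonempty) : FinTree (n + 1) (node A B) := by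
  have child : ∀ a : Bool, (cond a B A).Nonempty → FinTree n (cond a B A) := by
    intro a; cases a
    exacts [hA, hB]
  refine ⟨⟨[], nil_mem_node⟩, ?_, ?_, ?_⟩
  · rintro (_ | ⟨a, σ⟩) hσ
    · simp
    · rw [cons_mem_node] at hσ
      simpa using (child a ⟨σ, hσ⟩).2.1 σ hσ
  · rintro (_ | ⟨a, σ⟩) (_ | ⟨a', τ⟩) hp hτ
    · exact nil_mem_node
    · exact nil_mem_node
    · simp at hp
    · obtain ⟨rfl, hστ⟩ := List.cons_prefix_cons.1 hp
      rw [cons_mem_node] at hτ ⊢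
      exact (child a ⟨τ, hτ⟩).2.2.1 σ τ hστ hτ
  · rintro (_ | ⟨a, σ⟩) hσ hlen
    · obtain ⟨a, ha⟩ : ∃ a : Bool, (cond a B A).Nonempty := by
        rcases hAB with h | h
        exacts [⟨false, h⟩, ⟨true, h⟩]
      have := nil_mem_of_finTree (child a ha)
      cases a <;> simp_all
    · rw [cons_mem_node] at hσ
      have := (child a ⟨σ, hσ⟩).2.2.2 σ hσ (by simpa using hlen)
      simpa only [List.cons_append, cons_mem_node] using this

lemma finTree_subtree (h : FinTree (n + 1) T) (a : Bool) (ha : (subtree a T).Nonempty) :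
    FinTree n (subtree a T) := by
  refine ⟨ha, fun σ hσ => ?_, fun σ τ hp hτ => ?_, fun σ hσ hlen => ?_⟩
  · simpa using h.2.1 _ (mem_subtree.1 hσ)
  · exact mem_subtree.2 (h.2.2.1 _ _ (List.cons_prefix_cons.2 ⟨rfl, hp⟩) (mem_subtree.1 hτ))
  · simpa using h.2.2.2 _ (mem_subtree.1 hσ) (by simpa using hlen)

lemma subtree_nonempty_of_finTree (h : FinTree (n + 1) T) :
    (subtree false T).Nonempty ∨ (subtree true T).Nonempty := by
  rcases h.2.2.2 [] (nil_mem_of_finTree h) (Nat.succ_pos n) with h' | h'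
  exacts [.inl ⟨[], by simpa using h'⟩, .inr ⟨[], by simpa using h'⟩]

lemma finTree_succ_iff : FinTree (n + 1) T ↔ ∃ A B, node A B = T ∧
    (A.Nonempty → FinTree n A) ∧ (B.Nonempty → FinTree n B) ∧ (A.Nonempty ∨ B.Nonempty) := by
  refine ⟨fun h => ⟨_, _, node_subtree (nil_mem_of_finTree h), finTree_subtree h false,
    finTree_subtree h true, subtree_nonempty_of_finTree h⟩, ?_⟩
  rintro ⟨A, B, rfl, hA, hB, hAB⟩
  exact finTree_node hA hB hAB

end FinTree

def trees : ℕ → Finset (Finset (List Bool))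
  | 0 => {{[]}}
  | n + 1 => (trees n).image (node · ∅) ∪ (trees n).image (node ∅) ∪
      (trees n ×ˢ trees n).image fun p => node p.1 p.2

lemma mem_trees_iff {n : ℕ} {T : Finset (List Bool)} : T ∈ trees n ↔ FinTree n T := by
  induction n generalizing T with
  | zero => simp [trees, finTree_zero_iff]
  | succ n ih =>
    simp only [trees, Finset.mem_union, Finset.mem_image, Finset.mem_product, ih,
      finTree_succ_iff]
    constructor
    · rintro ((⟨A, hA, rfl⟩ | ⟨B, hB, rfl⟩) | ⟨⟨A, B⟩, ⟨hA, hB⟩, rfl⟩)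
      · exact ⟨A, ∅, rfl, fun _ => hA, by simp, .inl hA.1⟩
      · exact ⟨∅, B, rfl, by simp, fun _ => hB, .inr hB.1⟩
      · exact ⟨A, B, rfl, fun _ => hA, fun _ => hB, .inl hA.1⟩
    · rintro ⟨A, B, rfl, hA, hB, hAB⟩
      rcases A.eq_empty_or_nonempty with rfl | hA'
      · exact .inl (.inr ⟨B, hB (hAB.resolve_left (by simp)), rfl⟩)
      rcases B.eq_empty_or_nonempty with rfl | hB'
      · exact .inl (.inl ⟨A, hA hA', rfl⟩)
      · exact .inr ⟨(A, B), ⟨hA hA', hB hB'⟩, rfl⟩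

lemma nil_mem_of_mem_trees {n : ℕ} {T : Finset (List Bool)} (hT : T ∈ trees n) : [] ∈ T :=
  nil_mem_of_finTree (mem_trees_iff.1 hT)

lemma sum_trees_succ {M : Type*} [AddCommMonoid M] (n : ℕ) (f : Finset (List Bool) → M) :
    ∑ T ∈ trees (n + 1), f T = ∑ A ∈ trees n, f (node A ∅) + ∑ B ∈ trees n, f (node ∅ B) +
      ∑ A ∈ trees n, ∑ B ∈ trees n, f (node A B) := by
  have hne : ∀ A ∈ trees n, A ≠ ∅ := fun A hA h => by
    simpa [h] using nil_mem_of_mem_trees hA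
  rw [trees, Finset.sum_union, Finset.sum_union, Finset.sum_image, Finset.sum_image,
    Finset.sum_image, Finset.sum_product]
  all_goals simp only [Finset.disjoint_left, Finset.mem_union, Finset.mem_image,
    Finset.mem_product, Set.InjOn, Finset.mem_coe, node_inj, Prod.ext_iff]
  all_goals aesop (add simp node_inj)

lemma filter_node (n : ℕ) (A B : Finset (List Bool)) :
    {σ ∈ node A B | σ.length < n + 1} =
      node {σ ∈ A | σ.length < n} {σ ∈ B | σ.length < n} := by
  ext σ
  rcases σ with _ | ⟨_ | _, σ⟩ <;> simp

lemma prod_node {M : Type*} [CommMonoid M] (A B : Finset (List Bool)) (g : List Bool → M) :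
    ∏ σ ∈ node A B, g σ = g [] * ((∏ σ ∈ A, g (false :: σ)) * ∏ σ ∈ B, g (true :: σ)) := by
  rw [node, Finset.prod_insert (by simp), Finset.prod_union (by simp [Finset.disjoint_left]),
    Finset.prod_image (by simp), Finset.prod_image (by simp)]

section Moments

variable (b0 b1 : ℝ)

lemma asymWeight_node_nil (A B : Finset (List Bool)) :
    asymWeight b0 b1 (node A B) [] =
      if [] ∈ A ∧ [] ∈ B then 1 - b0 - b1 else if [] ∈ A then b0 else b1 := by
  simp [asymWeight]

lemma asymWeight_node_cons (A B : Finset (List Bool)) (a : Bool) (σ : List Bool) :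
    asymWeight b0 b1 (node A B) (a :: σ) = asymWeight b0 b1 (cond a B A) σ := by
  cases a <;> simp [asymWeight]

noncomputable def treeWeight (n : ℕ) (A : Finset (List Bool)) : ℝ :=
  ∏ σ ∈ A with σ.length < n, asymWeight b0 b1 A σ

lemma treeWeight_empty (n : ℕ) : treeWeight b0 b1 n ∅ = 1 := by
  simp [treeWeight]

lemma treeWeight_node (n : ℕ) (A B : Finset (List Bool)) :
    treeWeight b0 b1 (n + 1) (node A B) =
      asymWeight b0 b1 (node A B) [] * (treeWeight b0 b1 n A * treeWeight b0 b1 n B) := by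
  simp only [treeWeight, filter_node, prod_node, asymWeight_node_cons, cond_false, cond_true]

noncomputable def treeMean (n : ℕ) (f : Finset (List Bool) → ℝ) : ℝ :=
  ∑ T ∈ trees n, treeWeight b0 b1 n T * f T

lemma treeMean_succ (n : ℕ) (f : Finset (List Bool) → ℝ) :
    treeMean b0 b1 (n + 1) f = b0 * treeMean b0 b1 n (fun A => f (node A ∅)) +
      b1 * treeMean b0 b1 n (fun B => f (node ∅ B)) +
      (1 - b0 - b1) * treeMean b0 b1 n (fun A => treeMean b0 b1 n fun B => f (node A B)) := by
  simp only [treeMean, sum_trees_succ, treeWeight_node, asymWeight_node_nil, treeWeight_empty,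
    Finset.mul_sum]
  congr 1; congr 1
  all_goals refine Finset.sum_congr rfl fun A hA => ?_
  · simp [nil_mem_of_mem_trees hA]; ring
  · simp [nil_mem_of_mem_trees hA]; ring
  · refine Finset.sum_congr rfl fun B hB => ?_
    simp [nil_mem_of_mem_trees hA, nil_mem_of_mem_trees hB]; ring

lemma treeMean_zero (f : Finset (List Bool) → ℝ) : treeMean b0 b1 0 f = f {[]} := by
  simp [treeMean, trees, treeWeight]

@[simp]
lemma treeMean_const (n : ℕ) (c : ℝ) : treeMean b0 b1 n (fun _ => c) = c := by
  induction n with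
  | zero => exact treeMean_zero b0 b1 _
  | succ n ih => rw [treeMean_succ]; simp only [ih]; ring

@[simp]
lemma treeMean_const_mul (n : ℕ) (c : ℝ) (f : Finset (List Bool) → ℝ) :
    treeMean b0 b1 n (fun T => c * f T) = c * treeMean b0 b1 n f := by
  simp only [treeMean, Finset.mul_sum]
  exact Finset.sum_congr rfl fun _ _ => mul_left_comm _ _ _

@[simp]
lemma treeMean_mul_const (n : ℕ) (c : ℝ) (f : Finset (List Bool) → ℝ) :
    treeMean b0 b1 n (fun T => f T * c) = treeMean b0 b1 n f * c := by
  simpa only [mul_comm _ c] using treeMean_const_mul b0 b1 n c f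

/-- The probability that a node keeps its child in direction `a`. -/
def childProb (a : Bool) : ℝ := cond a (1 - b0) (1 - b1)

def hitProb (σ : List Bool) : ℝ := (σ.map (childProb b0 b1)).prod

@[simp]
lemma hitProb_cons (a : Bool) (σ : List Bool) :
    hitProb b0 b1 (a :: σ) = childProb b0 b1 a * hitProb b0 b1 σ := by
  simp [hitProb]

/-- Two paths share their nodes up to the first position where they differ; there the node must
keep both children, and from then on the two branches survive independently. -/
def jointHitProb : List Bool → List Bool → ℝ
  | [], [] => 1
  | a :: σ, b :: τ => if a = b then childProb b0 b1 a * jointHitProb σ τ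
      else (1 - b0 - b1) * (hitProb b0 b1 σ * hitProb b0 b1 τ)
  | _, _ => 0

lemma treeMean_hit {n : ℕ} {σ : List Bool} (hσ : σ.length = n) :
    treeMean b0 b1 n (fun T => if σ ∈ T then 1 else 0) = hitProb b0 b1 σ := by
  induction n generalizing σ with
  | zero => simp_all [treeMean_zero, hitProb]
  | succ n ih =>
    obtain ⟨a, σ, rfl⟩ := List.exists_cons_of_length_eq_add_one hσ
    rw [treeMean_succ]
    cases a <;> simp [ih (Nat.succ_inj.1 hσ), childProb] <;> ring

lemma treeMean_hit_hit {n : ℕ} {σ τ : List Bool} (hσ : σ.length = n) (hτ : τ.length = n) :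
    treeMean b0 b1 n (fun T => (if σ ∈ T then 1 else 0) * (if τ ∈ T then 1 else 0)) =
      jointHitProb b0 b1 σ τ := by
  induction n generalizing σ τ with
  | zero => simp_all [treeMean_zero, jointHitProb]
  | succ n ih =>
    obtain ⟨a, σ, rfl⟩ := List.exists_cons_of_length_eq_add_one hσ
    obtain ⟨b, τ, rfl⟩ := List.exists_cons_of_length_eq_add_one hτ
    simp only [List.length_cons, Nat.succ_inj] at hσ hτ
    rw [treeMean_succ]
    cases a <;> cases b <;>
      simp only [false_cons_mem_node, true_cons_mem_node, Finset.notMem_empty, if_false,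
        if_true, mul_zero, zero_mul, treeMean_const, treeMean_const_mul, treeMean_mul_const,
        ih hσ hτ, treeMean_hit b0 b1 hσ, treeMean_hit b0 b1 hτ, jointHitProb, childProb,
        cond_true, cond_false, Bool.false_eq_true, Bool.true_eq_false] <;>
      ring

def growth : ℝ := (1 - b0) ^ 2 + (1 - b1) ^ 2

lemma sum_sq_hitProb (n : ℕ) : ∑ σ ∈ strings n, hitProb b0 b1 σ ^ 2 = growth b0 b1 ^ n := by
  induction n with
  | zero => simp [strings, hitProb]
  | succ n ih =>
    simp only [sum_strings_succ, hitProb_cons, mul_pow, Finset.sum_add_distrib,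
      ← Finset.mul_sum, ih]
    simp only [childProb, cond_false, cond_true, growth, pow_succ]
    ring

noncomputable def secondMoment (n : ℕ) : ℝ :=
  ∑ σ ∈ strings n, ∑ τ ∈ strings n, jointHitProb b0 b1 σ τ ^ 2

lemma secondMoment_succ (n : ℕ) :
    secondMoment b0 b1 (n + 1) = growth b0 b1 * secondMoment b0 b1 n +
      2 * (1 - b0 - b1) ^ 2 * (growth b0 b1 ^ n) ^ 2 := by
  simp only [secondMoment, sum_strings_succ, jointHitProb, if_true, Bool.false_eq_true,
    Bool.true_eq_false, if_false, mul_pow, Finset.sum_add_distrib, ← Finset.mul_sum,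
    ← Finset.sum_mul, sum_sq_hitProb]
  simp only [childProb, cond_false, cond_true, growth]
  ring

lemma exists_secondMoment_le (hm : 1 < growth b0 b1) :
    ∃ C, ∀ n, secondMoment b0 b1 n ≤ C * (growth b0 b1 ^ n) ^ 2 := by
  set m := growth b0 b1
  have hm0 : 0 < m * (m - 1) := by nlinarith
  set C := 1 + 2 * (1 - b0 - b1) ^ 2 / (m * (m - 1))
  have hC : C * (m * (m - 1)) = m * (m - 1) + 2 * (1 - b0 - b1) ^ 2 := by
    rw [add_mul, one_mul, div_mul_cancel₀ _ hm0.ne']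
  clear_value C
  refine ⟨C, fun n => ?_⟩
  induction n with
  | zero =>
    simp only [secondMoment, strings, Finset.sum_singleton, jointHitProb]
    nlinarith [sq_nonneg (1 - b0 - b1)]
  | succ n ih =>
    have hmn : 0 ≤ (m ^ n) ^ 2 := by positivity
    calc secondMoment b0 b1 (n + 1)
        = m * secondMoment b0 b1 n + 2 * (1 - b0 - b1) ^ 2 * (m ^ n) ^ 2 := secondMoment_succ ..
      _ ≤ m * (C * (m ^ n) ^ 2) + 2 * (1 - b0 - b1) ^ 2 * (m ^ n) ^ 2 := by gcongr
      _ = C * (m ^ (n + 1)) ^ 2 - (m ^ n) ^ 2 * (m * (m - 1)) := by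
        linear_combination -(m ^ n) ^ 2 * hC
      _ ≤ C * (m ^ (n + 1)) ^ 2 := by nlinarith [mul_nonneg hmn hm0.le]

def commonCount (n : ℕ) (A B : Finset (List Bool)) : ℝ :=
  ∑ σ ∈ strings n, (if σ ∈ A then 1 else 0) * (if σ ∈ B then 1 else 0)

lemma sum_treeWeight_mul_commonCount (n : ℕ) :
    ∑ p ∈ trees n ×ˢ trees n,
      treeWeight b0 b1 n p.1 * treeWeight b0 b1 n p.2 * commonCount n p.1 p.2 =
    growth b0 b1 ^ n := by
  simp only [commonCount]
  rw [sum_product_mul_sum_mul_eq_sum_sq (u := fun σ A => if σ ∈ A then 1 else 0),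
    ← sum_sq_hitProb]
  exact Finset.sum_congr rfl fun σ hσ => by
    rw [← treeMean_hit b0 b1 (mem_strings.1 hσ), treeMean]

lemma sum_treeWeight_mul_commonCount_sq (n : ℕ) :
    ∑ p ∈ trees n ×ˢ trees n,
      treeWeight b0 b1 n p.1 * treeWeight b0 b1 n p.2 * commonCount n p.1 p.2 ^ 2 =
    secondMoment b0 b1 n := by
  have hsq : ∀ A B, commonCount n A B ^ 2 = ∑ q ∈ strings n ×ˢ strings n,
      ((if q.1 ∈ A then 1 else 0) * (if q.2 ∈ A then 1 else 0)) *
      ((if q.1 ∈ B then 1 else 0) * (if q.2 ∈ B then 1 else 0)) := fun A B => by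
    rw [commonCount, sq, Finset.sum_mul_sum, Finset.sum_product]
    exact Finset.sum_congr rfl fun _ _ => Finset.sum_congr rfl fun _ _ => by ring
  simp only [hsq]
  rw [sum_product_mul_sum_mul_eq_sum_sq
    (u := fun (q : List Bool × List Bool) A =>
      (if q.1 ∈ A then 1 else 0) * (if q.2 ∈ A then 1 else 0)),
    secondMoment, Finset.sum_product]
  refine Finset.sum_congr rfl fun σ hσ => Finset.sum_congr rfl fun τ hτ => ?_
  rw [← treeMean_hit_hit b0 b1 (mem_strings.1 hσ) (mem_strings.1 hτ), treeMean]

lemma exists_pos_le_sum_treeWeight_common (hm : 1 < growth b0 b1)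
    (hW : ∀ n, ∀ A ∈ trees n, 0 ≤ treeWeight b0 b1 n A) :
    ∃ c > 0, ∀ n, c ≤ ∑ p ∈ trees n ×ˢ trees n with ∃ σ ∈ strings n, σ ∈ p.1 ∧ σ ∈ p.2,
      treeWeight b0 b1 n p.1 * treeWeight b0 b1 n p.2 := by
  obtain ⟨C, hC⟩ := exists_secondMoment_le b0 b1 hm
  have hC1 : 1 ≤ C := by
    simpa [secondMoment, strings, jointHitProb] using hC 0
  refine ⟨C⁻¹, by positivity, fun n => ?_⟩
  have hw : ∀ p ∈ trees n ×ˢ trees n, 0 ≤ treeWeight b0 b1 n p.1 * treeWeight b0 b1 n p.2 :=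
    fun p hp => mul_nonneg (hW n _ (Finset.mem_product.1 hp).1)
      (hW n _ (Finset.mem_product.1 hp).2)
  have hCS := sq_sum_mul_le_sum_filter_mul_sum_mul_sq (trees n ×ˢ trees n)
    (fun p => treeWeight b0 b1 n p.1 * treeWeight b0 b1 n p.2) (fun p => commonCount n p.1 p.2)
    (fun p => ∃ σ ∈ strings n, σ ∈ p.1 ∧ σ ∈ p.2) hw fun p _ hp =>
      Finset.sum_eq_zero fun σ hσ => by
        by_cases h1 : σ ∈ p.1 <;> by_cases h2 : σ ∈ p.2 <;> simp_all
  rw [sum_treeWeight_mul_commonCount, sum_treeWeight_mul_commonCount_sq] at hCS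
  have hpos : 0 < (growth b0 b1 ^ n) ^ 2 := pow_pos (pow_pos (zero_lt_one.trans hm) n) 2
  have hF : 0 ≤ ∑ p ∈ trees n ×ˢ trees n with ∃ σ ∈ strings n, σ ∈ p.1 ∧ σ ∈ p.2,
      treeWeight b0 b1 n p.1 * treeWeight b0 b1 n p.2 :=
    Finset.sum_nonneg fun p hp => hw p (Finset.mem_filter.1 hp).1
  rw [inv_le_iff_one_le_mul₀ (by linarith)]
  nlinarith [mul_le_mul_of_nonneg_left (hC n) hF]

end Moments

lemma mem_cyl_iff {σ : List Bool} {x : Cantor} :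
    x ∈ cyl σ ↔ ∀ i (hi : i < σ.length), x i = σ[i] := by
  simp [cyl, Fin.forall_iff]

lemma isOpen_cyl (σ : List Bool) : IsOpen (cyl σ) := by
  have : cyl σ = ⋂ i : Fin σ.length, (fun x : Cantor => x i) ⁻¹' {σ.get i} := by
    ext x; simp [cyl]
  rw [this]
  exact isOpen_iInter_of_finite fun i =>
    (continuous_apply _).isOpen_preimage _ (isOpen_discrete _)

lemma cyl_subset_cyl {σ τ : List Bool} (h : σ <+: τ) : cyl τ ⊆ cyl σ := fun x hx => by
  rw [mem_cyl_iff] at hx ⊢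
  exact fun i hi => (hx i (hi.trans_le h.length_le)).trans (h.getElem hi).symm

lemma mem_cyl_append_self {σ : List Bool} {x : Cantor} (hx : x ∈ cyl σ) :
    x ∈ cyl (σ ++ [x σ.length]) := by
  rw [mem_cyl_iff] at hx ⊢
  intro i hi
  rw [List.getElem_append]
  split_ifs with h
  · exact hx i h
  · simp at hi; simp [show i = σ.length by omega]

def hitSet (σ : List Bool) : Set CC := {K | (K.1 ∩ cyl σ).Nonempty}

instance : BorelSpace CC := ⟨rfl⟩

lemma measurableSet_hitSet (σ : List Bool) : MeasurableSet (hitSet σ) :=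
  IsOpen.measurableSet <| TopologicalSpace.GenerateOpen.basic _ <|
    Or.inl ⟨cyl σ, isOpen_cyl σ, rfl⟩

lemma measurableSet_UA (n : ℕ) (A : Finset (List Bool)) : MeasurableSet (UA n A) := by
  have : UA n A = ⋂ σ : List Bool, ⋂ _ : σ.length ≤ n, {K | σ ∈ A ↔ K ∈ hitSet σ} := by
    ext K; simp [UA, hitSet]
  rw [this]
  refine MeasurableSet.iInter fun σ => MeasurableSet.iInter fun _ => ?_
  by_cases hσ : σ ∈ A
  · simp only [hσ, true_iff]
    exact measurableSet_hitSet σ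
  · simp only [hσ, false_iff]
    exact (measurableSet_hitSet σ).compl

/-- `treeOf n K` is `T_K ∩ {0,1}^{≤n}`. -/
noncomputable def treeOf (n : ℕ) (K : CC) : Finset (List Bool) :=
  open Classical in {σ ∈ (Finset.range (n + 1)).biUnion strings | (K.1 ∩ cyl σ).Nonempty}

lemma mem_treeOf {n : ℕ} {K : CC} {σ : List Bool} :
    σ ∈ treeOf n K ↔ σ.length ≤ n ∧ (K.1 ∩ cyl σ).Nonempty := by
  simp [treeOf]

lemma treeOf_mem_trees (n : ℕ) (K : CC) : treeOf n K ∈ trees n := by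
  refine mem_trees_iff.2 ⟨⟨[], mem_treeOf.2 ⟨by simp, ?_⟩⟩, fun σ hσ => (mem_treeOf.1 hσ).1,
    fun σ τ hp hτ => ?_, fun σ hσ hlen => ?_⟩
  · have : cyl [] = Set.univ := by ext; simp [mem_cyl_iff]
    simpa [this] using K.2.1
  · obtain ⟨hlen, hne⟩ := mem_treeOf.1 hτ
    exact mem_treeOf.2 ⟨hp.length_le.trans hlen,
      hne.mono (Set.inter_subset_inter_right _ (cyl_subset_cyl hp))⟩
  · obtain ⟨-, x, hxK, hx⟩ := mem_treeOf.1 hσ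
    have : σ ++ [x σ.length] ∈ treeOf n K :=
      mem_treeOf.2 ⟨by simpa using hlen, x, hxK, mem_cyl_append_self hx⟩
    cases h : x σ.length <;> simp_all

lemma preimage_treeOf {n : ℕ} {A : Finset (List Bool)} (hA : A ∈ trees n) :
    treeOf n ⁻¹' {A} = UA n A := by
  have hlen := (mem_trees_iff.1 hA).2.1
  ext K
  simp only [Set.mem_preimage, Set.mem_singleton_iff, UA, Set.mem_ofPred_eq, Finset.ext_iff,
    mem_treeOf]
  refine ⟨fun h σ hσ => ?_, fun h σ => ?_⟩
  · rw [← h σ]; simp [hσ]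
  · by_cases hσ : σ.length ≤ n
    · rw [h σ hσ]; simp [hσ]
    · exact iff_of_false (fun h' => hσ h'.1) fun h' => hσ (hlen σ h')

def agreeingPairs (n : ℕ) : Set (CC × CC) :=
  {p | ∃ x ∈ p.1.1, ∃ y ∈ p.2.1, ∀ i < n, x i = y i}

lemma agreeingPairs_antitone : Antitone agreeingPairs :=
  fun _ _ hmn _ ⟨x, hx, y, hy, h⟩ => ⟨x, hx, y, hy, fun i hi => h i (hi.trans_le hmn)⟩

lemma mem_cyl_ofFn {n : ℕ} {x y : Cantor} :
    y ∈ cyl (List.ofFn fun i : Fin n => x i) ↔ ∀ i < n, y i = x i := by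
  simp [mem_cyl_iff]

lemma agreeingPairs_eq_preimage (n : ℕ) :
    agreeingPairs n = Prod.map (treeOf n) (treeOf n) ⁻¹'
      ↑({p ∈ trees n ×ˢ trees n | ∃ σ ∈ strings n, σ ∈ p.1 ∧ σ ∈ p.2}) := by
  ext ⟨K, R⟩
  simp only [agreeingPairs, Set.mem_ofPred_eq, Set.mem_preimage, Prod.map, Finset.coe_filter,
    Finset.mem_product, treeOf_mem_trees, true_and, mem_strings, mem_treeOf]
  constructor
  · rintro ⟨x, hxK, y, hyR, h⟩
    refine ⟨_, List.length_ofFn, ⟨List.length_ofFn.le, x, hxK, mem_cyl_ofFn.2 fun _ _ => rfl⟩,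
      List.length_ofFn.le, y, hyR, mem_cyl_ofFn.2 fun i hi => (h i hi).symm⟩
  · rintro ⟨σ, rfl, ⟨-, x, hxK, hx⟩, -, y, hyR, hy⟩
    exact ⟨x, hxK, y, hyR, fun i hi => (mem_cyl_iff.1 hx i hi).trans (mem_cyl_iff.1 hy i hi).symm⟩

section Branching

variable {b0 b1 : ℝ} {μ : Measure CC}

lemma measureReal_UA (hμ : IsBranching b0 b1 μ) {n : ℕ} {A : Finset (List Bool)}
    (hA : A ∈ trees n) : μ.real (UA n A) = treeWeight b0 b1 n A :=
  hμ.2 n A (mem_trees_iff.1 hA)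

lemma measurableSet_preimage_treeOf_pair {n : ℕ} {p : Finset (List Bool) × Finset (List Bool)}
    (hp : p ∈ trees n ×ˢ trees n) : MeasurableSet (Prod.map (treeOf n) (treeOf n) ⁻¹' {p}) := by
  obtain ⟨hA, hB⟩ := Finset.mem_product.1 hp
  rw [← Set.singleton_prod_singleton, Set.preimage_prod_map_prod, preimage_treeOf hA,
    preimage_treeOf hB]
  exact (measurableSet_UA n _).prod (measurableSet_UA n _)

lemma measurableSet_agreeingPairs (n : ℕ) : MeasurableSet (agreeingPairs n) := by
  rw [agreeingPairs_eq_preimage, ← Set.biUnion_preimage_singleton]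
  exact Finset.measurableSet_biUnion _ fun p hp =>
    measurableSet_preimage_treeOf_pair (Finset.mem_filter.1 hp).1

lemma measureReal_agreeingPairs (hμ : IsBranching b0 b1 μ) (n : ℕ) :
    (μ.prod μ).real (agreeingPairs n) =
      ∑ p ∈ trees n ×ˢ trees n with ∃ σ ∈ strings n, σ ∈ p.1 ∧ σ ∈ p.2,
        treeWeight b0 b1 n p.1 * treeWeight b0 b1 n p.2 := by
  have := hμ.1
  rw [agreeingPairs_eq_preimage, ← sum_measureReal_preimage_singleton _
    fun p hp => measurableSet_preimage_treeOf_pair (Finset.mem_filter.1 hp).1]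
  refine Finset.sum_congr rfl fun p hp => ?_
  obtain ⟨hA, hB⟩ := Finset.mem_product.1 (Finset.mem_filter.1 hp).1
  rw [← Set.singleton_prod_singleton, Set.preimage_prod_map_prod, measureReal_prod_prod,
    preimage_treeOf hA, preimage_treeOf hB, measureReal_UA hμ hA, measureReal_UA hμ hB]

lemma iInter_agreeingPairs_subset :
    ⋂ n, agreeingPairs n ⊆ {p : CC × CC | (p.2.1 ∩ p.1.1).Nonempty} := fun p hp => by
  rw [Set.mem_ofPred_eq, Set.inter_comm]
  exact inter_nonempty_of_forall_agree p.1.2.2 p.2.2.2 (Set.mem_iInter.1 hp)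

lemma measure_iInter_agreeingPairs_pos (hμ : IsBranching b0 b1 μ) (hm : 1 < growth b0 b1) :
    0 < (μ.prod μ) (⋂ n, agreeingPairs n) := by
  have := hμ.1
  obtain ⟨c, hc, hcn⟩ := exists_pos_le_sum_treeWeight_common b0 b1 hm
    fun n A hA => measureReal_UA hμ hA ▸ measureReal_nonneg
  rw [agreeingPairs_antitone.measure_iInter
    (fun n => (measurableSet_agreeingPairs n).nullMeasurableSet) ⟨0, measure_ne_top _ _⟩]
  refine (ENNReal.ofReal_pos.2 hc).trans_le (le_iInf fun n => ?_)
  exact ENNReal.ofReal_le_of_le_toReal ((hcn n).trans_eq (measureReal_agreeingPairs hμ n).symm)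

lemma measure_setOf_cap_pos_pos [IsFiniteMeasure μ] {D : Set (CC × CC)} (hD : MeasurableSet D)
    (hsub : D ⊆ {p | (p.2.1 ∩ p.1.1).Nonempty}) (hpos : 0 < (μ.prod μ) D) :
    0 < μ {R : CC | 0 < cap μ R.1} := by
  refine pos_iff_ne_zero.2 fun h => hpos.ne' ((Measure.measure_prod_null hD).2 ?_)
  refine (measure_eq_zero_iff_ae_notMem.1 h).mono fun R hR => ?_
  have hcap : μ {K : CC | (K.1 ∩ R.1).Nonempty} = 0 := by
    simpa [cap, ENNReal.toReal_pos_iff, pos_iff_ne_zero, measure_ne_top] using hR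
  exact measure_mono_null (fun K hK => hsub hK) hcap

lemma one_lt_growth (hcase : (b0 + b1) / 2 < 1 - Real.sqrt 2 / 2 ∨
      (1 - Real.sqrt 2 / 2 ≤ (b0 + b1) / 2 ∧
        Real.sqrt (8 * ((b0 + b1) / 2) - 4 * ((b0 + b1) / 2) ^ 2 - 2) < |b0 - b1|)) :
    1 < growth b0 b1 := by
  suffices h : 8 * ((b0 + b1) / 2) - 4 * ((b0 + b1) / 2) ^ 2 - 2 < (b0 - b1) ^ 2 by
    simp only [growth]; nlinarith
  rcases hcase with h | ⟨-, h⟩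
  · have h2 : Real.sqrt 2 ^ 2 = 2 := Real.sq_sqrt zero_le_two
    have ht : 0 < 1 - (b0 + b1) / 2 - Real.sqrt 2 / 2 := by linarith
    nlinarith [sq_nonneg (b0 - b1), mul_pos ht (by positivity : 0 < Real.sqrt 2)]
  · rcases le_or_gt 0 (8 * ((b0 + b1) / 2) - 4 * ((b0 + b1) / 2) ^ 2 - 2) with hx | hx
    · rw [← sq_abs (b0 - b1), ← Real.sq_sqrt hx]
      exact pow_lt_pow_left₀ h (Real.sqrt_nonneg _) two_ne_zero
    · linarith [sq_nonneg (b0 - b1)]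

end Branching

end BranchingCapacity

theorem stmt_3_general (b0 b1 : ℝ)
    (μ : Measure CC) (hμ : IsBranching b0 b1 μ)
    (hcase : (b0 + b1) / 2 < 1 - Real.sqrt 2 / 2 ∨
      (1 - Real.sqrt 2 / 2 ≤ (b0 + b1) / 2 ∧
        Real.sqrt (8 * ((b0 + b1) / 2) - 4 * ((b0 + b1) / 2) ^ 2 - 2) < |b0 - b1|)) :
    0 < μ {R : CC | 0 < cap μ R.1} := by
  have := hμ.1
  have hpos := BranchingCapacity.measure_iInter_agreeingPairs_pos hμ
    (BranchingCapacity.one_lt_growth hcase)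
  exact BranchingCapacity.measure_setOf_cap_pos_pos
    (.iInter BranchingCapacity.measurableSet_agreeingPairs)
    BranchingCapacity.iInter_agreeingPairs_subset hpos

/-- for the `(b₀,b₁)`-branching measure, if `b = (b₀+b₁)/2 < 1 − √2/2`, or
`b ≥ 1 − √2/2` and `|b₀ − b₁| > √(8b − 4b² − 2)`, then the collection of closed sets of
positive capacity has positive measure. -/
theorem stmt_3 (b0 b1 : ℝ) (h0 : 0 < b0) (h1 : 0 < b1) (hsum : b0 + b1 < 1)
    (μ : Measure CC) (hμ : IsBranching b0 b1 μ)
    (hcase : (b0 + b1) / 2 < 1 - Real.sqrt 2 / 2 ∨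
      (1 - Real.sqrt 2 / 2 ≤ (b0 + b1) / 2 ∧
        Real.sqrt (8 * ((b0 + b1) / 2) - 4 * ((b0 + b1) / 2) ^ 2 - 2) < |b0 - b1|)) :
    0 < μ {R : CC | 0 < cap μ R.1} :=
  stmt_3_general b0 b1 μ hμ hcase
end

section
/- Let μ* be the symmetric branching measure on C with constant parameter b = 1/3 (so every internal node of the canonical tree of a random closed set independently has only its left child, only its right child, or both children, each with probability 1/3), and let T be the associated capacity. Then for μ*-almost every R ∈ C, T(R) = 0. -/
open Set MeasureTheory Topology Filter

/-!
Let `μ` be the symmetric branching measure with constant parameter `b`. Splitting a finite tree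
at its root, the weights of the trees of height `n + 1` through `c :: σ` factor as `b` (one
child) or `1 - 2b` (both children) times the weights of the two subtrees; since the weights of
all trees of height `n` sum to `1`, this gives `μ {K : K meets I(σ)} = (1 - b) ^ |σ|`.
If `K` meets `R`, they meet a common cylinder of length `m`, so
`T(R) ≤ ∑_{|σ| = m, R meets I(σ)} μ {K : K meets I(σ)}`, whose `μ`-integral in `R` is
`2 ^ m (1 - b) ^ (2m) = (2 (1 - b)²) ^ m`. For `b = 1/3` this is `(8/9) ^ m → 0`, so `T = 0`
almost everywhere.
-/

namespace SymBranching

noncomputable section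

def strings (n : ℕ) : Finset (List Bool) :=
  Finset.univ.image (List.ofFn : (Fin n → Bool) → List Bool)

lemma mem_strings {n : ℕ} {σ : List Bool} : σ ∈ strings n ↔ σ.length = n := by
  simp only [strings, Finset.mem_image, Finset.mem_univ, true_and]
  constructor
  · rintro ⟨f, rfl⟩
    exact List.length_ofFn
  · rintro rfl
    exact ⟨σ.get, List.ofFn_get σ⟩

lemma card_strings (n : ℕ) : (strings n).card = 2 ^ n := by
  rw [strings, Finset.card_image_of_injective _ List.ofFn_injective]
  simp

open Classical in
def stringsUpTo (n : ℕ) : Finset (List Bool) :=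
  (Finset.range (n + 1)).biUnion strings

lemma mem_stringsUpTo {n : ℕ} {σ : List Bool} : σ ∈ stringsUpTo n ↔ σ.length ≤ n := by
  simp [stringsUpTo, mem_strings]

lemma cyl_nil : cyl [] = univ :=
  eq_univ_of_forall fun _ i => i.elim0

lemma cyl_anti {σ τ : List Bool} (h : σ <+: τ) : cyl τ ⊆ cyl σ := by
  intro x hx i
  simpa [h.getElem i.2] using hx ⟨i, i.2.trans_le h.length_le⟩

lemma mem_cyl_ofFn (x : Cantor) (n : ℕ) : x ∈ cyl (List.ofFn fun i : Fin n => x i) := by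
  intro i
  simp

lemma mem_cyl_append_self {σ : List Bool} {x : Cantor} (hx : x ∈ cyl σ) :
    x ∈ cyl (σ ++ [x σ.length]) := by
  rintro ⟨i, hi⟩
  rw [List.length_append, List.length_singleton, Nat.lt_succ_iff] at hi
  rcases hi.lt_or_eq with hi | rfl
  · simpa [List.getElem_append_left hi] using hx ⟨i, hi⟩
  · simp

lemma isOpen_cyl (σ : List Bool) : IsOpen (cyl σ) := by
  have : cyl σ = ⋂ i : Fin σ.length, (fun x : Cantor => x i) ⁻¹' {σ.get i} := by
    ext x; simp [cyl]
  rw [this]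
  exact isOpen_iInter_of_finite fun i => (continuous_apply _).isOpen_preimage _ (isOpen_discrete _)

def hit (σ : List Bool) : Set CC := {K | (K.1 ∩ cyl σ).Nonempty}

lemma measurableSet_hit (σ : List Bool) : MeasurableSet (hit σ) :=
  MeasurableSpace.measurableSet_generateFrom <|
    TopologicalSpace.isOpen_generateFrom_of_mem (Or.inl ⟨cyl σ, isOpen_cyl σ, rfl⟩)

lemma FinTree.nil_mem {n : ℕ} {A : Finset (List Bool)} (hA : FinTree n A) : [] ∈ A :=
  have ⟨σ, hσ⟩ := hA.1
  hA.2.2.1 [] σ List.nil_prefix hσ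

open Classical in
/-- The tree `T_K ∩ {0,1}^{≤ n}`. -/
def traceTree (n : ℕ) (K : CC) : Finset (List Bool) :=
  (stringsUpTo n).filter fun σ => (K.1 ∩ cyl σ).Nonempty

lemma mem_traceTree {n : ℕ} {K : CC} {σ : List Bool} :
    σ ∈ traceTree n K ↔ σ.length ≤ n ∧ (K.1 ∩ cyl σ).Nonempty := by
  simp [traceTree, mem_stringsUpTo]

lemma finTree_traceTree (n : ℕ) (K : CC) : FinTree n (traceTree n K) := by
  refine ⟨⟨[], mem_traceTree.2 ⟨by simp, by simpa [cyl_nil] using K.2.1⟩⟩,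
    fun σ hσ => (mem_traceTree.1 hσ).1, fun σ τ hστ hτ => ?_, fun σ hσ hlt => ?_⟩
  · rw [mem_traceTree] at hτ ⊢
    exact ⟨hστ.length_le.trans hτ.1,
      hτ.2.mono (inter_subset_inter_right _ (cyl_anti hστ))⟩
  · obtain ⟨x, hxK, hxσ⟩ := (mem_traceTree.1 hσ).2
    have hext : σ ++ [x σ.length] ∈ traceTree n K :=
      mem_traceTree.2 ⟨by simpa using hlt, x, hxK, mem_cyl_append_self hxσ⟩
    cases hb : x σ.length <;> rw [hb] at hext <;> simp [hext]

lemma mem_UA_traceTree (n : ℕ) (K : CC) : K ∈ UA n (traceTree n K) := fun σ hσ => by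
  simp [mem_traceTree, hσ]

lemma eq_traceTree_of_mem_UA {n : ℕ} {A : Finset (List Bool)} {K : CC}
    (hA : FinTree n A) (hK : K ∈ UA n A) : A = traceTree n K := by
  ext σ
  by_cases hσ : σ.length ≤ n
  · simp [mem_traceTree, hσ, hK σ hσ]
  · exact iff_of_false (fun h => hσ (hA.2.1 σ h)) (fun h => hσ (mem_traceTree.1 h).1)

open Classical in
def finTrees (n : ℕ) : Finset (Finset (List Bool)) :=
  (stringsUpTo n).powerset.filter (FinTree n)

lemma mem_finTrees {n : ℕ} {A : Finset (List Bool)} : A ∈ finTrees n ↔ FinTree n A := by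
  simp only [finTrees, Finset.mem_filter, Finset.mem_powerset, and_iff_right_iff_imp]
  exact fun hA σ hσ => mem_stringsUpTo.2 (hA.2.1 σ hσ)

lemma measurableSet_UA (n : ℕ) (A : Finset (List Bool)) : MeasurableSet (UA n A) := by
  classical
  have : UA n A = ⋂ σ ∈ stringsUpTo n, if σ ∈ A then hit σ else (hit σ)ᶜ := by
    ext K
    simp only [UA, mem_iInter, mem_stringsUpTo, mem_ofPred_eq]
    refine forall₂_congr fun σ _ => ?_
    split_ifs with h <;> simp [hit, h]
  rw [this]
  refine .biInter (stringsUpTo n).countable_toSet fun σ _ => ?_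
  split_ifs
  exacts [measurableSet_hit σ, (measurableSet_hit σ).compl]

lemma pairwiseDisjoint_UA (n : ℕ) :
    (finTrees n : Set (Finset (List Bool))).PairwiseDisjoint (UA n) :=
  fun _ hA _ hB hAB => disjoint_left.2 fun _ hKA hKB => hAB <|
    (eq_traceTree_of_mem_UA (mem_finTrees.1 hA) hKA).trans
      (eq_traceTree_of_mem_UA (mem_finTrees.1 hB) hKB).symm

lemma iUnion_UA (n : ℕ) : ⋃ A ∈ finTrees n, UA n A = univ :=
  eq_univ_of_forall fun K =>
    mem_biUnion (mem_finTrees.2 (finTree_traceTree n K)) (mem_UA_traceTree n K)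

lemma hit_eq_biUnion_UA (σ : List Bool) :
    hit σ = ⋃ A ∈ (finTrees σ.length).filter (σ ∈ ·), UA σ.length A := by
  ext K
  simp only [mem_iUnion, Finset.mem_filter, exists_prop]
  refine ⟨fun hK => ⟨_, ⟨mem_finTrees.2 (finTree_traceTree _ K),
    mem_traceTree.2 ⟨le_rfl, hK⟩⟩, mem_UA_traceTree _ K⟩, ?_⟩
  rintro ⟨A, ⟨-, hσA⟩, hKA⟩
  exact (hKA σ le_rfl).1 hσA

def treeWeight (b : ℝ) (n : ℕ) (A : Finset (List Bool)) : ℝ :=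
  ∏ σ ∈ A.filter (·.length < n), symWeight (fun _ => b) A σ

lemma sum_treeWeight_finTrees {b : ℝ} {μ : Measure CC} (hμ : IsSymBranching (fun _ => b) μ)
    (n : ℕ) : ∑ A ∈ finTrees n, treeWeight b n A = 1 := by
  have := hμ.1
  have hsum : ∑ A ∈ finTrees n, μ (UA n A) = 1 := by
    rw [← measure_biUnion_finset (pairwiseDisjoint_UA n) fun A _ => measurableSet_UA n A,
      iUnion_UA, measure_univ]
  rw [← ENNReal.toReal_one, ← hsum, ENNReal.toReal_sum fun A _ => measure_ne_top μ _]
  exact Finset.sum_congr rfl fun A hA => (hμ.2 n A (mem_finTrees.1 hA)).symm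

def subtree (c : Bool) (A : Finset (List Bool)) : Finset (List Bool) :=
  A.preimage (c :: ·) List.cons_injective.injOn

lemma mem_subtree {c : Bool} {A : Finset (List Bool)} {τ : List Bool} :
    τ ∈ subtree c A ↔ c :: τ ∈ A :=
  Finset.mem_preimage

lemma symWeight_cons (β : List Bool → ℝ) (A : Finset (List Bool)) (c : Bool) (τ : List Bool) :
    symWeight β A (c :: τ) = symWeight (fun τ => β (c :: τ)) (subtree c A) τ := by
  simp [symWeight, mem_subtree]

def graft (c : Bool) (A B : Finset (List Bool)) : Finset (List Bool) :=
  insert [] (A.image (c :: ·) ∪ B.image ((!c) :: ·))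

lemma nil_mem_graft {c : Bool} {A B : Finset (List Bool)} : [] ∈ graft c A B :=
  Finset.mem_insert_self _ _

lemma cons_mem_graft {c d : Bool} {A B : Finset (List Bool)} {τ : List Bool} :
    d :: τ ∈ graft c A B ↔ d = c ∧ τ ∈ A ∨ d = !c ∧ τ ∈ B := by
  cases c <;> cases d <;> simp [graft]

lemma subtree_graft_self (c : Bool) (A B : Finset (List Bool)) : subtree c (graft c A B) = A := by
  ext τ
  cases c <;> simp [mem_subtree, cons_mem_graft]

lemma subtree_graft_not (c : Bool) (A B : Finset (List Bool)) :
    subtree (!c) (graft c A B) = B := by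
  ext τ
  cases c <;> simp [mem_subtree, cons_mem_graft]

lemma graft_subtree {A : Finset (List Bool)} (hA : [] ∈ A) (c : Bool) :
    graft c (subtree c A) (subtree (!c) A) = A := by
  ext (_ | ⟨d, τ⟩)
  · simp [nil_mem_graft, hA]
  · cases c <;> cases d <;> simp [cons_mem_graft, mem_subtree]

lemma finTree_subtree {n : ℕ} {A : Finset (List Bool)} (hA : FinTree (n + 1) A) {c : Bool}
    (hne : (subtree c A).Nonempty) : FinTree n (subtree c A) := by
  refine ⟨hne, fun σ hσ => ?_, fun σ τ hστ hτ => ?_, fun σ hσ hlt => ?_⟩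
  · simpa using hA.2.1 _ (mem_subtree.1 hσ)
  · exact mem_subtree.2
      (hA.2.2.1 _ _ (List.cons_prefix_cons.2 ⟨rfl, hστ⟩) (mem_subtree.1 hτ))
  · simpa [mem_subtree] using hA.2.2.2 _ (mem_subtree.1 hσ) (Nat.succ_lt_succ hlt)

lemma finTree_graft {n : ℕ} {A B : Finset (List Bool)} (c : Bool) (hA : FinTree n A)
    (hB : B = ∅ ∨ FinTree n B) : FinTree (n + 1) (graft c A B) := by
  have hsub : ∀ d, subtree d (graft c A B) = ∅ ∨ FinTree n (subtree d (graft c A B)) := by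
    intro d
    obtain rfl | rfl : d = c ∨ d = !c := by cases c <;> cases d <;> simp
    · simpa [subtree_graft_self] using Or.inr hA
    · simpa [subtree_graft_not] using hB
  refine ⟨⟨[], nil_mem_graft⟩, ?_, ?_, ?_⟩
  · rintro (_ | ⟨d, τ⟩) hτ
    · simp
    · rw [← mem_subtree] at hτ
      rcases hsub d with h | h
      · simp [h] at hτ
      · simpa using h.2.1 τ hτ
  · rintro (_ | ⟨d, σ⟩) (_ | ⟨d', τ⟩) hστ hτ
    · exact nil_mem_graft
    · exact nil_mem_graft
    · simp at hστ
    · obtain ⟨rfl, hστ'⟩ := List.cons_prefix_cons.1 hστ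
      rw [← mem_subtree] at hτ ⊢
      rcases hsub d with h | h
      · simp [h] at hτ
      · exact h.2.2.1 σ τ hστ' hτ
  · rintro (_ | ⟨d, σ⟩) hσ hlt
    · have : [c] ∈ graft c A B := cons_mem_graft.2 (Or.inl ⟨rfl, FinTree.nil_mem hA⟩)
      cases c <;> simp [this]
    · rw [← mem_subtree] at hσ
      rcases hsub d with h | h
      · simp [h] at hσ
      · simpa [mem_subtree] using h.2.2.2 σ hσ (by simpa using hlt)

lemma treeWeight_graft (b : ℝ) (n : ℕ) (c : Bool) {A : Finset (List Bool)} (hA : [] ∈ A)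
    (B : Finset (List Bool)) :
    treeWeight b (n + 1) (graft c A B) =
      (if [] ∈ B then 1 - 2 * b else b) * treeWeight b n A * treeWeight b n B := by
  have hfilter : (graft c A B).filter (·.length < n + 1) =
      insert [] ((A.filter (·.length < n)).image (c :: ·) ∪
        (B.filter (·.length < n)).image ((!c) :: ·)) := by
    ext (_ | ⟨d, τ⟩)
    · simp [nil_mem_graft]
    · cases c <;> cases d <;> simp [cons_mem_graft, and_comm]
  have hdisj : Disjoint ((A.filter (·.length < n)).image (c :: ·))
      ((B.filter (·.length < n)).image ((!c) :: ·)) := by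
    simp only [Finset.disjoint_left, Finset.mem_image]
    rintro _ ⟨_, _, rfl⟩ ⟨_, _, h⟩
    cases c <;> simp at h
  have hroot : symWeight (fun _ => b) (graft c A B) [] = if [] ∈ B then 1 - 2 * b else b := by
    cases c <;> simp [symWeight, cons_mem_graft, hA]
  rw [treeWeight, hfilter, Finset.prod_insert (by simp), Finset.prod_union hdisj,
    Finset.prod_image (List.cons_injective.injOn), Finset.prod_image (List.cons_injective.injOn),
    hroot, mul_assoc]
  congr 2 <;> refine Finset.prod_congr rfl fun τ _ => ?_
  · rw [symWeight_cons, subtree_graft_self]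
  · rw [symWeight_cons, subtree_graft_not]

lemma empty_notMem_finTrees (n : ℕ) : ∅ ∉ finTrees n :=
  fun h => Finset.not_nonempty_empty (mem_finTrees.1 h).1

lemma finTrees_zero : finTrees 0 = {{[]}} := by
  ext A
  rw [mem_finTrees, Finset.mem_singleton]
  constructor
  · intro hA
    refine Finset.eq_singleton_iff_unique_mem.2 ⟨FinTree.nil_mem hA, fun σ hσ => ?_⟩
    simpa using hA.2.1 σ hσ
  · rintro rfl
    refine ⟨Finset.singleton_nonempty _, by simp, fun σ τ hστ hτ => ?_, by simp⟩
    rw [Finset.mem_singleton] at hτ ⊢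
    exact List.eq_nil_of_prefix_nil (hτ ▸ hστ)

/-- A tree of height `n + 1` through `c :: σ` is the graft of a tree of height `n` through `σ`
with an arbitrary, possibly empty, tree of height `n`. -/
lemma sum_finTrees_cons_mem {M : Type*} [AddCommMonoid M] (f : Finset (List Bool) → M)
    (c : Bool) (σ : List Bool) (n : ℕ) :
    ∑ A ∈ (finTrees (n + 1)).filter (c :: σ ∈ ·), f A =
      ∑ p ∈ (finTrees n).filter (σ ∈ ·) ×ˢ insert ∅ (finTrees n),
        f (graft c p.1 p.2) := by
  symm
  refine Finset.sum_nbij' (fun p => graft c p.1 p.2) (fun A => (subtree c A, subtree (!c) A))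
    ?_ ?_ ?_ ?_ fun _ _ => rfl
  · rintro ⟨A, B⟩ hAB
    simp only [Finset.mem_product, Finset.mem_filter, Finset.mem_insert, mem_finTrees] at hAB ⊢
    obtain ⟨⟨hA, hσ⟩, hB⟩ := hAB
    exact ⟨finTree_graft c hA hB, cons_mem_graft.2 (Or.inl ⟨rfl, hσ⟩)⟩
  · intro A hA
    simp only [Finset.mem_product, Finset.mem_filter, Finset.mem_insert, mem_finTrees] at hA ⊢
    obtain ⟨hA, hσ⟩ := hA
    refine ⟨⟨finTree_subtree hA ⟨σ, mem_subtree.2 hσ⟩, mem_subtree.2 hσ⟩, ?_⟩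
    obtain h | h := (subtree (!c) A).eq_empty_or_nonempty
    exacts [Or.inl h, Or.inr (finTree_subtree hA h)]
  · rintro ⟨A, B⟩ -
    simp [subtree_graft_self, subtree_graft_not]
  · intro A hA
    exact graft_subtree (FinTree.nil_mem (mem_finTrees.1 (Finset.mem_filter.1 hA).1)) c

lemma sum_treeWeight_filter_mem {b : ℝ} {μ : Measure CC} (hμ : IsSymBranching (fun _ => b) μ)
    (σ : List Bool) :
    ∑ A ∈ (finTrees σ.length).filter (σ ∈ ·), treeWeight b σ.length A =
      (1 - b) ^ σ.length := by
  induction σ with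
  | nil =>
    simp [finTrees_zero, treeWeight, Finset.filter_singleton]
  | cons c σ ih =>
    have hroot : ∑ B ∈ insert ∅ (finTrees σ.length),
        (if [] ∈ B then 1 - 2 * b else b) * treeWeight b σ.length B = 1 - b := by
      rw [Finset.sum_insert (empty_notMem_finTrees _), if_neg (Finset.notMem_empty _),
        Finset.sum_congr rfl fun B hB => by rw [if_pos (FinTree.nil_mem (mem_finTrees.1 hB))],
        ← Finset.mul_sum, sum_treeWeight_finTrees hμ]
      simp [treeWeight]
      ring
    rw [List.length_cons, sum_finTrees_cons_mem, pow_succ, ← ih, ← hroot, Finset.sum_mul_sum,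
      Finset.sum_product]
    refine Finset.sum_congr rfl fun A hA => Finset.sum_congr rfl fun B _ => ?_
    rw [treeWeight_graft _ _ _ (FinTree.nil_mem (mem_finTrees.1 (Finset.mem_filter.1 hA).1))]
    ring

lemma toReal_measure_hit {b : ℝ} {μ : Measure CC} (hμ : IsSymBranching (fun _ => b) μ)
    (σ : List Bool) : (μ (hit σ)).toReal = (1 - b) ^ σ.length := by
  have := hμ.1
  rw [hit_eq_biUnion_UA, measure_biUnion_finset
      ((pairwiseDisjoint_UA _).subset (Finset.coe_subset.2 (Finset.filter_subset _ _)))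
      fun A _ => measurableSet_UA _ A, ENNReal.toReal_sum fun A _ => measure_ne_top μ _,
    ← sum_treeWeight_filter_mem hμ]
  exact Finset.sum_congr rfl fun A hA => hμ.2 _ A (mem_finTrees.1 (Finset.mem_filter.1 hA).1)

lemma measure_sq_hit {b : ℝ} {μ : Measure CC} (hμ : IsSymBranching (fun _ => b) μ)
    (σ : List Bool) : μ (hit σ) ^ 2 = ENNReal.ofReal (((1 - b) ^ 2) ^ σ.length) := by
  have := hμ.1
  have h := toReal_measure_hit hμ σ
  rw [← ENNReal.ofReal_toReal (measure_ne_top μ (hit σ)),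
    ← ENNReal.ofReal_pow ENNReal.toReal_nonneg,
    h, ← pow_mul, ← pow_mul, mul_comm]

/-- If `K` meets `R`, both meet a common cylinder of length `m`. -/
lemma measure_meets_le_sum_indicator (μ : Measure CC) (m : ℕ) (R : CC) :
    μ {K : CC | (K.1 ∩ R.1).Nonempty} ≤
      ∑ σ ∈ strings m, (hit σ).indicator (fun _ => μ (hit σ)) R := by
  classical
  have hcover : {K : CC | (K.1 ∩ R.1).Nonempty} ⊆
      ⋃ σ ∈ (strings m).filter (R ∈ hit ·), hit σ := by
    rintro K ⟨x, hxK, hxR⟩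
    refine mem_biUnion (x := List.ofFn fun i : Fin m => x i) ?_ ⟨x, hxK, mem_cyl_ofFn x m⟩
    exact Finset.mem_filter.2 ⟨mem_strings.2 (List.length_ofFn), x, hxR, mem_cyl_ofFn x m⟩
  calc μ {K : CC | (K.1 ∩ R.1).Nonempty}
      ≤ ∑ σ ∈ (strings m).filter (R ∈ hit ·), μ (hit σ) :=
        (measure_mono hcover).trans (measure_biUnion_finset_le _ _)
    _ = ∑ σ ∈ strings m, (hit σ).indicator (fun _ => μ (hit σ)) R := by
        rw [Finset.sum_filter]
        rfl

lemma lintegral_sum_indicator_hit (μ : Measure CC) (m : ℕ) :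
    ∫⁻ R, ∑ σ ∈ strings m, (hit σ).indicator (fun _ => μ (hit σ)) R ∂μ =
      ∑ σ ∈ strings m, μ (hit σ) ^ 2 := by
  rw [lintegral_finsetSum _ fun σ _ => measurable_const.indicator (measurableSet_hit σ)]
  refine Finset.sum_congr rfl fun σ _ => ?_
  rw [lintegral_indicator_const (measurableSet_hit σ), sq]

theorem ae_cap_eq_zero {b : ℝ} {μ : Measure CC} (hμ : IsSymBranching (fun _ => b) μ)
    (hb : 2 * (1 - b) ^ 2 < 1) : ∀ᵐ R ∂μ, cap μ R.1 = 0 := by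
  set g : ℕ → CC → ENNReal :=
    fun m R => ∑ σ ∈ strings m, (hit σ).indicator (fun _ => μ (hit σ)) R
  have hg : ∀ m, ∫⁻ R, g m R ∂μ = ENNReal.ofReal ((2 * (1 - b) ^ 2) ^ m) := by
    intro m
    rw [lintegral_sum_indicator_hit, Finset.sum_congr rfl fun σ hσ => by
      rw [measure_sq_hit hμ, mem_strings.1 hσ], Finset.sum_const, card_strings, nsmul_eq_mul,
      mul_pow, ENNReal.ofReal_mul (by positivity), ENNReal.ofReal_pow zero_le_two]
    simp
  have hlim : Tendsto (fun m => ENNReal.ofReal ((2 * (1 - b) ^ 2) ^ m)) atTop (𝓝 0) := by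
    simpa using ENNReal.tendsto_ofReal (tendsto_pow_atTop_nhds_zero_of_lt_one (by positivity) hb)
  have hmeas : Measurable fun R => ⨅ m, g m R := Measurable.iInf fun m =>
    Finset.measurable_sum _ fun σ _ => measurable_const.indicator (measurableSet_hit σ)
  have hzero : ∫⁻ R, ⨅ m, g m R ∂μ = 0 := le_antisymm
    (ge_of_tendsto' hlim fun m => (lintegral_mono fun R => iInf_le _ m).trans_eq (hg m)) bot_le
  filter_upwards [(lintegral_eq_zero_iff hmeas).1 hzero] with R hR
  have : μ {K : CC | (K.1 ∩ R.1).Nonempty} = 0 :=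
    le_antisymm ((le_iInf fun m => measure_meets_le_sum_indicator μ m R).trans_eq hR) bot_le
  simp [cap, this]

end

end SymBranching

/-- for the symmetric branching measure with constant parameter `b = 1/3`,
almost every closed set has capacity zero. -/
theorem stmt_10 (μ : Measure CC) (hμ : IsSymBranching (fun _ => (1 : ℝ) / 3) μ) :
    ∀ᵐ R ∂μ, cap μ R.1 = 0 :=
  SymBranching.ae_cap_eq_zero hμ (by norm_num)
end
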